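/- arXiv:2406.18480 — 8 statements merged into one kernel-verified Lean document; each statement's English description precedes it below -/
import Mathlib

section
/- For every integer t ≥ 2 one has β*_t < 1/2. -/
/-!
Put `q = e^{-2x}`. Every integrand in `β*_t` is then `q^{b+1} / (1 + q)^c`, and merging the two
sums (one over even `b`, one over odd `b`) gives `β*_{n+1} = ∫_0^∞ q D_n(q) dx` with
`D_n(q) = ∑_b C(⌊(n-b)/2⌋, b) q^b / (1 + q)^{⌊(n-b)/2⌋+1}` (`diagSum n q`); the cut-offs
`⌊(t-c)/6⌋` are exactly where these binomial coefficients vanish. Pascal's rule gives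
`(1 + q) D_{n+3} = D_{n+1} + q D_n`, so `(1 + q) D_n ≤ 1` by induction from
`D_0 = D_1 = 1/(1+q)` and `D_2 = 1/(1+q)^2`. Hence the integrand is at most
`q / (1 + q) ≤ q - q^2/2`, whose integral is `1/2 - 1/8 = 3/8 < 1/2`.
-/

/-- `Ical a c = ∫_0^∞ e^{−ax}/(1+e^{−2x})^c dx`. -/
noncomputable def Ical (a c : ℕ) : ℝ :=
  ∫ x in Set.Ioi (0 : ℝ), Real.exp (-(a : ℝ) * x) / (1 + Real.exp (-2 * x)) ^ c

/-- `ub t c = ⌊(t − c)/6⌋ + 1`, computed in `ℤ` and truncated to `ℕ`; this is the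
number of terms in a sum `Σ_{k=0}^{⌊(t−c)/6⌋}` (zero when `t < c − 5`). -/
def ub (t c : ℕ) : ℕ := ((((t : ℤ) - c) / 6) + 1).toNat

/-- The constant `β*_t` of Ballantine–Burson–Craig–Folsom–Wen. -/
noncomputable def betaStar (t : ℕ) : ℝ :=
  if Even t then
    (∑ k ∈ Finset.range (ub t 4),
        (Nat.choose ((t - 2 * k - 2) / 2) (2 * k + 1) : ℝ) * Ical (4 * k + 4) ((t - 2 * k) / 2))
      + ∑ k ∈ Finset.range (ub t 2),
        (Nat.choose ((t - 2 * k - 2) / 2) (2 * k) : ℝ) * Ical (4 * k + 2) ((t - 2 * k) / 2)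
  else
    (∑ k ∈ Finset.range (ub t 1),
        (Nat.choose ((t - 2 * k - 1) / 2) (2 * k) : ℝ) * Ical (4 * k + 2) ((t - 2 * k + 1) / 2))
      + ∑ k ∈ Finset.range (ub t 5),
        (Nat.choose ((t - 2 * k - 3) / 2) (2 * k + 1) : ℝ) * Ical (4 * k + 4) ((t - 2 * k - 1) / 2)

open Real MeasureTheory Set Finset

theorem Finset.sum_range_two_mul {M : Type*} [AddCommMonoid M] (f : ℕ → M) (n : ℕ) :
    ∑ i ∈ range (2 * n), f i = ∑ k ∈ range n, f (2 * k) + ∑ k ∈ range n, f (2 * k + 1) := by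
  induction n with
  | zero => simp
  | succ n ih =>
    rw [show 2 * (n + 1) = 2 * n + 1 + 1 by ring, sum_range_succ, sum_range_succ, ih,
      sum_range_succ, sum_range_succ]
    abel

noncomputable def diagTerm (n b : ℕ) (q : ℝ) : ℝ :=
  ((n - b) / 2).choose b * q ^ b / (1 + q) ^ ((n + 2 - b) / 2)

noncomputable def diagSum (n : ℕ) (q : ℝ) : ℝ :=
  ∑ b ∈ range (n + 1), diagTerm n b q

lemma diagTerm_eq_zero {n b : ℕ} (h : n < 3 * b) (q : ℝ) : diagTerm n b q = 0 := by
  simp [diagTerm, Nat.choose_eq_zero_of_lt (show (n - b) / 2 < b by omega)]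

lemma diagSum_eq_sum_range {n N : ℕ} (hN : n + 1 ≤ N) (q : ℝ) :
    diagSum n q = ∑ b ∈ range N, diagTerm n b q :=
  (eventually_constant_sum (fun _ hb => diagTerm_eq_zero (by omega) q) hN).symm

lemma one_add_mul_diagTerm_add_three {q : ℝ} (hq : 1 + q ≠ 0) (n b : ℕ) :
    (1 + q) * diagTerm (n + 3) (b + 1) q = diagTerm (n + 1) (b + 1) q + q * diagTerm n b q := by
  rcases lt_or_ge n b with hb | hb
  · simp [diagTerm_eq_zero (show n + 3 < 3 * (b + 1) by omega),
      diagTerm_eq_zero (show n + 1 < 3 * (b + 1) by omega),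
      diagTerm_eq_zero (show n < 3 * b by omega)]
  obtain ⟨j, hj⟩ : ∃ j, (n - b) / 2 = j := ⟨_, rfl⟩
  simp only [diagTerm, show (n + 3 - (b + 1)) / 2 = j + 1 by omega,
    show (n + 3 + 2 - (b + 1)) / 2 = j + 2 by omega, show (n + 1 - (b + 1)) / 2 = j by omega,
    show (n + 2 - b) / 2 = j + 1 by omega, hj,
    Nat.choose_succ_succ', Nat.cast_add]
  field_simp
  ring

lemma one_add_mul_diagSum_add_three {q : ℝ} (hq : 1 + q ≠ 0) (n : ℕ) :
    (1 + q) * diagSum (n + 3) q = diagSum (n + 1) q + q * diagSum n q := by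
  have hzero : (1 + q) * diagTerm (n + 3) 0 q = diagTerm (n + 1) 0 q := by
    simp only [diagTerm, Nat.sub_zero, Nat.choose_zero_right, pow_succ,
      show (n + 3 + 2) / 2 = (n + 1 + 2) / 2 + 1 by omega]
    field_simp
  rw [diagSum, sum_range_succ', mul_add, mul_sum,
    sum_congr rfl fun b _ => one_add_mul_diagTerm_add_three hq n b, sum_add_distrib, ← mul_sum,
    hzero, diagSum_eq_sum_range (show n + 1 + 1 ≤ n + 4 by omega),
    diagSum_eq_sum_range (show n + 1 ≤ n + 3 by omega), sum_range_succ' _ (n + 3)]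
  ring

lemma one_add_mul_diagSum_le_one {q : ℝ} (hq : 0 ≤ q) (n : ℕ) : (1 + q) * diagSum n q ≤ 1 := by
  induction n using Nat.strong_induction_on with
  | _ n ih =>
    match n with
    | 0 | 1 => simp [diagSum, diagTerm, sum_range_succ, (show 0 < 1 + q by positivity).ne']
    | 2 =>
      have h2 : diagSum 2 q = ((1 + q) ^ 2)⁻¹ := by simp [diagSum, diagTerm, sum_range_succ]
      rw [h2, ← div_eq_mul_inv, div_le_one (by positivity)]
      nlinarith
    | n + 3 =>
      have hn₁ := ih (n + 1) (by omega)
      have hn₀ := ih n (by omega)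
      have hrec := one_add_mul_diagSum_add_three (show 1 + q ≠ 0 by positivity) n
      nlinarith

lemma mul_diagSum_le {q : ℝ} (hq₀ : 0 ≤ q) (hq₁ : q ≤ 1) (n : ℕ) :
    q * diagSum n q ≤ q - q ^ 2 / 2 := by
  have hpos : 0 < 1 + q := by linarith
  have h := one_add_mul_diagSum_le_one hq₀ n
  calc q * diagSum n q ≤ q / (1 + q) := by
        rw [le_div_iff₀ hpos]; nlinarith
    _ ≤ q - q ^ 2 / 2 := by
        rw [div_le_iff₀ hpos]; nlinarith [mul_nonneg (sq_nonneg q) (sub_nonneg.2 hq₁)]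

theorem betaStar_succ (n : ℕ) :
    betaStar (n + 1) =
      ∑ b ∈ range (n + 1), (((n - b) / 2).choose b : ℝ) * Ical (2 * b + 2) ((n + 2 - b) / 2) := by
  set g : ℕ → ℝ := fun b => (((n - b) / 2).choose b : ℝ) * Ical (2 * b + 2) ((n + 2 - b) / 2)
  have hg : ∀ b, n < 3 * b → g b = 0 := fun b hb => by
    simp [g, Nat.choose_eq_zero_of_lt (show (n - b) / 2 < b by omega)]
  have hsplit : ∑ b ∈ range (n + 1), g b =
      ∑ k ∈ range (n + 1), g (2 * k) + ∑ k ∈ range (n + 1), g (2 * k + 1) := by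
    rw [← sum_range_two_mul,
      eventually_constant_sum (fun b hb => hg b (by omega)) (show n + 1 ≤ 2 * (n + 1) by omega)]
  have hpart : ∀ (b top rate ex : ℕ → ℕ) (c : ℕ), (∀ k, top k = (n - b k) / 2) →
      (∀ k, rate k = 2 * b k + 2) → (∀ k, ex k = (n + 2 - b k) / 2) →
      (∀ k ≥ ub (n + 1) c, n < 3 * b k) →
      ∑ k ∈ range (ub (n + 1) c), ((top k).choose (b k) : ℝ) * Ical (rate k) (ex k) =
        ∑ k ∈ range (n + 1), g (b k) := fun b top rate ex c htop hrate hex hb =>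
    (sum_congr rfl fun k _ => by rw [htop, hrate, hex]).trans
      (eventually_constant_sum (fun k hk => hg _ (hb k hk)) (by simp only [ub]; omega)).symm
  rw [hsplit, betaStar]
  split_ifs with h <;> rw [Nat.even_iff] at h
  on_goal 1 => rw [add_comm]
  all_goals
    congr 1 <;>
      exact hpart _ _ _ _ _ (fun _ => by omega) (fun _ => by omega) (fun _ => by omega)
        fun k hk => by simp only [ub] at hk; omega

lemma integrableOn_exp_div_one_add_pow {a : ℝ} (ha : 0 < a) (c : ℕ) :
    IntegrableOn (fun x => exp (-a * x) / (1 + exp (-2 * x)) ^ c) (Ioi 0) := by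
  refine (exp_neg_integrableOn_Ioi 0 ha).mono' (by fun_prop : Measurable _).aestronglyMeasurable ?_
  refine Filter.Eventually.of_forall fun x => ?_
  rw [norm_of_nonneg (by positivity)]
  exact div_le_self (exp_pos _).le (one_le_pow₀ (by linarith [exp_pos (-2 * x)]))

lemma exp_mul_diagSum (n : ℕ) (x : ℝ) :
    exp (-2 * x) * diagSum n (exp (-2 * x)) =
      ∑ b ∈ range (n + 1), (((n - b) / 2).choose b : ℝ) *
        (exp (-((2 * b + 2 : ℕ) : ℝ) * x) / (1 + exp (-2 * x)) ^ ((n + 2 - b) / 2)) := by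
  rw [diagSum, mul_sum]
  refine sum_congr rfl fun b _ => ?_
  have hexp : exp (-((2 * b + 2 : ℕ) : ℝ) * x) = exp (-2 * x) * exp (-2 * x) ^ b := by
    rw [← exp_nat_mul, ← exp_add]; push_cast; ring_nf
  rw [diagTerm, hexp]
  ring

lemma integrableOn_exp_mul_diagSum (n : ℕ) :
    IntegrableOn (fun x => exp (-2 * x) * diagSum n (exp (-2 * x))) (Ioi 0) := by
  simp_rw [exp_mul_diagSum]
  exact integrable_finsetSum _ fun b _ =>
    (integrableOn_exp_div_one_add_pow (by positivity) _).const_mul _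

theorem betaStar_succ_eq_integral (n : ℕ) :
    betaStar (n + 1) = ∫ x in Ioi 0, exp (-2 * x) * diagSum n (exp (-2 * x)) := by
  simp_rw [betaStar_succ, exp_mul_diagSum]
  rw [integral_finsetSum _ fun b _ =>
    (integrableOn_exp_div_one_add_pow (by positivity) _).const_mul _]
  exact sum_congr rfl fun b _ => (integral_const_mul _ _).symm

/-- For every integer `t ≥ 2`, one has `β*_t < 1/2`. -/
theorem betaStar_lt_half (t : ℕ) (ht : 2 ≤ t) : betaStar t < 1 / 2 := by
  obtain ⟨n, rfl⟩ : ∃ n, t = n + 1 := ⟨t - 1, by omega⟩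
  have hexp_two := integrableOn_exp_mul_Ioi (show (-2 : ℝ) < 0 by norm_num) 0
  have hexp_four := integrableOn_exp_mul_Ioi (show (-4 : ℝ) < 0 by norm_num) 0
  calc betaStar (n + 1)
      = ∫ x in Ioi 0, exp (-2 * x) * diagSum n (exp (-2 * x)) := betaStar_succ_eq_integral n
    _ ≤ ∫ x in Ioi 0, (exp (-2 * x) - exp (-4 * x) / 2) := by
        refine setIntegral_mono_on (integrableOn_exp_mul_diagSum n)
          (hexp_two.sub (hexp_four.div_const 2)) measurableSet_Ioi fun x hx => ?_
        have hsq : exp (-2 * x) ^ 2 = exp (-4 * x) := by rw [sq, ← exp_add]; ring_nf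
        rw [← hsq]
        exact mul_diagSum_le (exp_pos _).le (exp_le_one_iff.2 (by linarith [hx.out])) n
    _ = 3 / 8 := by
        rw [integral_sub hexp_two (hexp_four.div_const 2), integral_div,
          integral_exp_mul_Ioi (by norm_num), integral_exp_mul_Ioi (by norm_num)]
        norm_num
    _ < 1 / 2 := by norm_num
end

section
/- With γ*_t := 1/(2β*_t), one has lim_{t→∞} γ*_t = 3/(2 ln(5/2)); equivalently, lim_{t→∞} β*_t = (1/3) ln(5/2). -/
open Finset Real MeasureTheory Filter Topology

/-- The guard keeps the truncated subtraction `n - 2 * e` from producing spurious terms. -/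
def padovanCoeff (e n : ℕ) : ℕ := if 2 * e ≤ n then e.choose (n - 2 * e) else 0

/-- `padovanSum f n = Σ_{2e+m=n} C(e,m) f m e`; for `f ≡ 1` these are the Padovan numbers, which
count compositions of `n` into parts `2` and `3`. -/
def padovanSum (f : ℕ → ℕ → ℝ) (n : ℕ) : ℝ :=
  ∑ e ∈ range (n / 2 + 1), (padovanCoeff e n : ℝ) * f (n - 2 * e) e

lemma padovanCoeff_succ_add_three (e n : ℕ) :
    padovanCoeff (e + 1) (n + 3) = padovanCoeff e (n + 1) + padovanCoeff e n := by
  unfold padovanCoeff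
  rcases lt_trichotomy (2 * e) (n + 1) with h | h | h
  · rw [if_pos (by omega), if_pos (by omega), if_pos (by omega),
      show n + 3 - 2 * (e + 1) = n - 2 * e + 1 by omega,
      show n + 1 - 2 * e = n - 2 * e + 1 by omega, Nat.choose_succ_succ', add_comm]
  · rw [if_pos (by omega), if_pos (by omega), if_neg (by omega),
      show n + 3 - 2 * (e + 1) = 0 by omega, show n + 1 - 2 * e = 0 by omega]
    simp
  · rw [if_neg (by omega), if_neg (by omega), if_neg (by omega)]

lemma padovanSum_eq_sum_range (f : ℕ → ℕ → ℝ) {n N : ℕ} (hN : n / 2 < N) :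
    padovanSum f n = ∑ e ∈ range N, (padovanCoeff e n : ℝ) * f (n - 2 * e) e := by
  refine sum_subset (range_subset_range.2 hN) fun e _ he => ?_
  simp only [mem_range] at he
  simp [padovanCoeff, show ¬ 2 * e ≤ n by omega]

lemma padovanSum_add_three (f : ℕ → ℕ → ℝ) (n : ℕ) :
    padovanSum f (n + 3) = padovanSum (fun m e => f m (e + 1)) (n + 1)
      + padovanSum (fun m e => f (m + 1) (e + 1)) n := by
  rw [padovanSum_eq_sum_range f (N := n + 4) (by omega),
    padovanSum_eq_sum_range _ (N := n + 3) (by omega),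
    padovanSum_eq_sum_range _ (N := n + 3) (by omega), ← sum_add_distrib, sum_range_succ',
    show padovanCoeff 0 (n + 3) = 0 by simp [padovanCoeff], Nat.cast_zero, zero_mul, add_zero]
  refine sum_congr rfl fun e _ => ?_
  rw [padovanCoeff_succ_add_three, show n + 3 - 2 * (e + 1) = n + 1 - 2 * e by omega]
  rcases le_or_gt (2 * e) n with h | h
  · rw [show n - 2 * e + 1 = n + 1 - 2 * e by omega]
    push_cast
    ring
  · simp [padovanCoeff, show ¬ 2 * e ≤ n by omega]

lemma padovanSum_const_mul (c : ℝ) (f : ℕ → ℕ → ℝ) (n : ℕ) :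
    padovanSum (fun m e => c * f m e) n = c * padovanSum f n := by
  simp only [padovanSum, mul_sum]
  exact sum_congr rfl fun _ _ => by ring

lemma padovanSum_eq_sum_choose (f : ℕ → ℕ → ℝ) {n r N : ℕ} (hr : r ≤ 1) (hN : N ≤ n + 1)
    (hvanish : n < 3 * N + r) :
    ∑ k ∈ range N, ((n - k).choose (2 * k + r) : ℝ) * f (2 * k + r) (n - k)
      = padovanSum f (2 * n + r) := by
  calc ∑ k ∈ range N, ((n - k).choose (2 * k + r) : ℝ) * f (2 * k + r) (n - k)
      = ∑ k ∈ range (n + 1), ((n - k).choose (2 * k + r) : ℝ) * f (2 * k + r) (n - k) := by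
        refine sum_subset (range_subset_range.2 hN) fun k _ hk => ?_
        simp only [mem_range] at hk
        rw [Nat.choose_eq_zero_of_lt (by omega), Nat.cast_zero, zero_mul]
    _ = ∑ e ∈ range (n + 1), (padovanCoeff e (2 * n + r) : ℝ) * f (2 * n + r - 2 * e) e := by
        rw [← sum_range_reflect]
        refine sum_congr rfl fun k hk => ?_
        simp only [mem_range] at hk
        rw [show n + 1 - 1 - k = n - k by omega, padovanCoeff, if_pos (by omega),
          show n - (n - k) = k by omega, show 2 * (n - k) + r = 2 * n + r - 2 * k by omega]
    _ = padovanSum f (2 * n + r) := (padovanSum_eq_sum_range f (by omega)).symm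

lemma betaStar_add_two (t : ℕ) :
    betaStar (t + 2) = padovanSum (fun m e => Ical (2 * m + 2) (e + 1)) t
      + padovanSum (fun m e => Ical (2 * m + 2) (e + 1)) (t + 1) := by
  set I : ℕ → ℕ → ℝ := fun m e => Ical (2 * m + 2) (e + 1)
  have term_congr {a b c d a' c' d' : ℕ} (ha : a = a') (hc : c = c') (hd : d = d') :
      (a.choose b : ℝ) * Ical c d = (a'.choose b : ℝ) * Ical c' d' := by
    rw [ha, hc, hd]
  rcases Nat.even_or_odd' t with ⟨n, rfl | rfl⟩
  · rw [betaStar, if_pos ⟨n + 1, by ring⟩, add_comm]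
    congr 1
    · refine (sum_congr rfl fun k hk => ?_).trans (padovanSum_eq_sum_choose I (n := n) (r := 0)
        (N := ub (2 * n + 2) 2) zero_le_one (by unfold ub; omega) (by unfold ub; omega))
      simp only [mem_range, ub] at hk
      exact term_congr (by omega) (by omega) (by omega)
    · refine (sum_congr rfl fun k hk => ?_).trans (padovanSum_eq_sum_choose I (n := n) (r := 1)
        (N := ub (2 * n + 2) 4) le_rfl (by unfold ub; omega) (by unfold ub; omega))
      simp only [mem_range, ub] at hk
      exact term_congr (by omega) (by omega) (by omega)
  · rw [betaStar, if_neg (Nat.not_even_iff_odd.2 ⟨n + 1, by ring⟩), add_comm]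
    congr 1
    · refine (sum_congr rfl fun k hk => ?_).trans (padovanSum_eq_sum_choose I (n := n) (r := 1)
        (N := ub (2 * n + 1 + 2) 5) le_rfl (by unfold ub; omega) (by unfold ub; omega))
      simp only [mem_range, ub] at hk
      exact term_congr (by omega) (by omega) (by omega)
    · refine (sum_congr rfl fun k hk => ?_).trans (padovanSum_eq_sum_choose I (n := n + 1)
        (r := 0) (N := ub (2 * n + 1 + 2) 1) zero_le_one (by unfold ub; omega)
        (by unfold ub; omega))
      simp only [mem_range, ub] at hk
      exact term_congr (by omega) (by omega) (by omega)

noncomputable def padovan (u : ℝ) : ℕ → ℝ :=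
  padovanSum fun m e => u ^ (m + 1) / (1 + u) ^ (e + 1)

lemma padovan_zero (u : ℝ) : padovan u 0 = u / (1 + u) := by
  simp [padovan, padovanSum, padovanCoeff]

lemma padovan_one (u : ℝ) : padovan u 1 = 0 := by
  simp [padovan, padovanSum, padovanCoeff]

lemma padovan_two (u : ℝ) : padovan u 2 = u / (1 + u) ^ 2 := by
  simp [padovan, padovanSum, padovanCoeff, sum_range_succ]

lemma padovan_add_three {u : ℝ} (hu : 1 + u ≠ 0) (n : ℕ) :
    padovan u (n + 3) = (padovan u (n + 1) + u * padovan u n) / (1 + u) := by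
  have h₁ : (fun m e => u ^ (m + 1) / (1 + u) ^ (e + 1 + 1))
      = fun m e => (1 + u)⁻¹ * (u ^ (m + 1) / (1 + u) ^ (e + 1)) := by
    ext m e
    rw [pow_succ _ (e + 1)]
    field_simp
  have h₂ : (fun m e => u ^ (m + 1 + 1) / (1 + u) ^ (e + 1 + 1))
      = fun m e => (u / (1 + u)) * (u ^ (m + 1) / (1 + u) ^ (e + 1)) := by
    ext m e
    rw [pow_succ _ (e + 1), pow_succ _ (m + 1)]
    field_simp
  rw [padovan, padovanSum_add_three, h₁, h₂, padovanSum_const_mul, padovanSum_const_mul]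
  field_simp

lemma padovan_invariant {u : ℝ} (hu : 1 + u ≠ 0) (n : ℕ) :
    (1 + u) * (padovan u (n + 2) + padovan u (n + 1)) + u * padovan u n = u := by
  induction n with
  | zero =>
    rw [padovan_two, padovan_one, padovan_zero]
    field_simp
    ring
  | succ n ih =>
    rw [padovan_add_three hu n, mul_add, mul_div_cancel₀ _ hu]
    linear_combination ih

lemma Convex.mem_of_add_three {𝕜 E : Type*} [Semiring 𝕜] [PartialOrder 𝕜] [AddCommMonoid E]
    [SMul 𝕜 E] {s : Set E} (hs : Convex 𝕜 s) {a b : 𝕜} (ha : 0 ≤ a) (hb : 0 ≤ b)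
    (hab : a + b = 1) {x : ℕ → E} (hx : ∀ n, x (n + 3) = a • x (n + 1) + b • x n)
    (h₀ : x 0 ∈ s) (h₁ : x 1 ∈ s) (h₂ : x 2 ∈ s) (n : ℕ) : x n ∈ s := by
  have window : ∀ n, x n ∈ s ∧ x (n + 1) ∈ s ∧ x (n + 2) ∈ s := by
    intro n
    induction n with
    | zero => exact ⟨h₀, h₁, h₂⟩
    | succ n ih => exact ⟨ih.2.1, ih.2.2, hx n ▸ hs ih.2.1 ih.1 ha hb hab⟩
  exact (window n).1

lemma padovan_mem_Icc {u : ℝ} (hu : 0 ≤ u) (n : ℕ) :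
    padovan u n ∈ Set.Icc 0 (u / (1 + u)) := by
  have hu₁ : 0 < 1 + u := by linarith
  refine (convex_Icc _ _).mem_of_add_three (a := 1 / (1 + u)) (b := u / (1 + u)) (by positivity)
    (by positivity) (by field_simp) (fun n => ?_) ?_ ?_ ?_ n
  · rw [padovan_add_three hu₁.ne', smul_eq_mul, smul_eq_mul]
    ring
  · rw [padovan_zero]
    exact ⟨by positivity, le_rfl⟩
  · rw [padovan_one]
    exact ⟨le_rfl, by positivity⟩
  · rw [padovan_two]
    refine ⟨by positivity, div_le_div_of_nonneg_left hu hu₁ ?_⟩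
    nlinarith

lemma tendsto_zero_of_linear_rec {r₁ r₂ : ℂ} (h₁ : ‖r₁‖ < 1) (h₂ : ‖r₂‖ < 1) (hne : r₁ ≠ r₂)
    {a : ℕ → ℂ} (ha : ∀ n, a (n + 2) = (r₁ + r₂) * a (n + 1) - r₁ * r₂ * a n) :
    Tendsto a atTop (𝓝 0) := by
  have hsub : r₁ - r₂ ≠ 0 := sub_ne_zero.2 hne
  set A := (a 1 - r₂ * a 0) / (r₁ - r₂)
  set B := (r₁ * a 0 - a 1) / (r₁ - r₂)
  have closed_form : ∀ n, a n = A * r₁ ^ n + B * r₂ ^ n := by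
    intro n
    induction n using Nat.twoStepInduction with
    | zero => simp only [A, B]; field_simp; ring
    | one => simp only [A, B]; field_simp; ring
    | more n ih ih₁ =>
      rw [ha, ih, ih₁]
      ring
  simpa [funext closed_form] using
    ((tendsto_pow_atTop_nhds_zero_of_norm_lt_one h₁).const_mul A).add
      ((tendsto_pow_atTop_nhds_zero_of_norm_lt_one h₂).const_mul B)

lemma tendsto_zero_of_add_two_add_add_mul_eq_zero {w : ℝ} (hw₀ : 0 < w) (hw : w < 1 / 2)
    (hw₄ : w ≠ 1 / 4) {a : ℕ → ℝ} (ha : ∀ n, a (n + 2) + a (n + 1) + w * a n = 0) :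
    Tendsto a atTop (𝓝 0) := by
  obtain ⟨s, hs⟩ := IsAlgClosed.exists_pow_nat_eq ((1 - 4 * w : ℝ) : ℂ) two_pos
  have hs_norm : ‖s‖ < 1 := by
    rw [← sq_lt_one_iff₀ (norm_nonneg _), ← norm_pow, hs, Complex.norm_real, Real.norm_eq_abs,
      abs_lt]
    constructor <;> linarith
  have hs₀ : s ≠ 0 := by
    rintro rfl
    apply hw₄
    have : (1 - 4 * w : ℝ) = 0 := by exact_mod_cast hs.symm.trans (zero_pow two_ne_zero)
    linarith
  push_cast at hs
  have hnorm_one : ‖(-1 : ℂ)‖ = 1 := by simp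
  have hr₁ : ‖(-1 + s) / 2‖ < 1 := by
    rw [norm_div, Complex.norm_two, div_lt_one two_pos]
    linarith [norm_add_le (-1 : ℂ) s]
  have hr₂ : ‖(-1 - s) / 2‖ < 1 := by
    rw [norm_div, Complex.norm_two, div_lt_one two_pos]
    linarith [norm_sub_le (-1 : ℂ) s]
  have ha' : ∀ n, (a (n + 2) : ℂ) = ((-1 + s) / 2 + (-1 - s) / 2) * a (n + 1)
      - (-1 + s) / 2 * ((-1 - s) / 2) * a n := by
    intro n
    have h : (a (n + 2) : ℂ) + a (n + 1) + w * a n = 0 := by exact_mod_cast ha n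
    linear_combination h - (a n : ℂ) / 4 * hs
  have := tendsto_zero_of_linear_rec (a := fun n => (a n : ℂ)) hr₁ hr₂
    (by intro h; apply hs₀; linear_combination h) ha'
  exact tendsto_ofReal_iff.1 (by simpa using this)

lemma tendsto_padovan {u : ℝ} (hu₀ : 0 < u) (hu₁ : u < 1) (hu₃ : u ≠ 1 / 3) :
    Tendsto (padovan u) atTop (𝓝 (u / (2 + 3 * u))) := by
  have h1u : 1 + u ≠ 0 := by positivity
  have hT := tendsto_zero_of_add_two_add_add_mul_eq_zero (w := u / (1 + u)) (by positivity)
    (by rw [div_lt_iff₀ (by positivity)]; linarith)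
    (by rw [Ne, div_eq_iff h1u]; contrapose! hu₃; linarith)
    (a := fun n => padovan u n - u / (2 + 3 * u)) (fun n => by
      have h := padovan_invariant h1u n
      field_simp
      linear_combination (2 + 3 * u) * h)
  simpa using hT.add_const (u / (2 + 3 * u))

lemma integral_padovanSum {α : Type*} [MeasurableSpace α] {μ : Measure α}
    {g : ℕ → ℕ → α → ℝ} (hg : ∀ m e, Integrable (g m e) μ) (n : ℕ) :
    ∫ x, padovanSum (fun m e => g m e x) n ∂μ = padovanSum (fun m e => ∫ x, g m e x ∂μ) n := by
  unfold padovanSum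
  rw [integral_finsetSum _ fun e _ => (hg _ _).const_mul _]
  simp_rw [integral_const_mul]

lemma integrable_padovanSum {α : Type*} [MeasurableSpace α] {μ : Measure α}
    {g : ℕ → ℕ → α → ℝ} (hg : ∀ m e, Integrable (g m e) μ) (n : ℕ) :
    Integrable (fun x => padovanSum (fun m e => g m e x) n) μ :=
  integrable_finsetSum _ fun _ _ => (hg _ _).const_mul _

lemma integrableOn_pow_exp_div (m c : ℕ) :
    IntegrableOn (fun x => exp (-2 * x) ^ (m + 1) / (1 + exp (-2 * x)) ^ c) (Set.Ioi 0) := by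
  refine (exp_neg_integrableOn_Ioi 0 two_pos).mono'
    (Measurable.aestronglyMeasurable (by fun_prop)) ?_
  filter_upwards [ae_restrict_mem measurableSet_Ioi] with x hx
  have hu₁ : exp (-2 * x) ≤ 1 := exp_le_one_iff.2 (by linarith [Set.mem_Ioi.1 hx])
  rw [Real.norm_of_nonneg (by positivity)]
  calc exp (-2 * x) ^ (m + 1) / (1 + exp (-2 * x)) ^ c ≤ exp (-2 * x) ^ (m + 1) :=
        div_le_self (by positivity) (one_le_pow₀ (by linarith [exp_pos (-2 * x)]))
    _ ≤ exp (-2 * x) := pow_le_of_le_one (exp_nonneg _) hu₁ (Nat.succ_ne_zero m)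

lemma Ical_two_mul_add_two (m c : ℕ) :
    Ical (2 * m + 2) c = ∫ x in Set.Ioi 0, exp (-2 * x) ^ (m + 1) / (1 + exp (-2 * x)) ^ c := by
  unfold Ical
  congr 1 with x
  rw [← exp_nat_mul]
  push_cast
  ring_nf

lemma integrableOn_padovan_exp (n : ℕ) :
    IntegrableOn (fun x => padovan (exp (-2 * x)) n) (Set.Ioi 0) :=
  integrable_padovanSum (fun _ _ => integrableOn_pow_exp_div _ _) n

lemma betaStar_add_two_eq_integral (t : ℕ) :
    betaStar (t + 2)
      = ∫ x in Set.Ioi 0, (padovan (exp (-2 * x)) t + padovan (exp (-2 * x)) (t + 1)) := by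
  rw [betaStar_add_two, integral_add (integrableOn_padovan_exp _) (integrableOn_padovan_exp _)]
  simp only [Ical_two_mul_add_two]
  rw [← integral_padovanSum (fun _ _ => integrableOn_pow_exp_div _ _),
    ← integral_padovanSum (fun _ _ => integrableOn_pow_exp_div _ _)]
  rfl

lemma integral_exp_div : ∫ x in Set.Ioi 0, 2 * exp (-2 * x) / (2 + 3 * exp (-2 * x))
    = (1 / 3) * log (5 / 2) := by
  have hpos (x : ℝ) : 0 < 2 + 3 * exp (-2 * x) := by positivity
  have hderiv (x : ℝ) : HasDerivAt (fun x => -(1 / 3) * log (2 + 3 * exp (-2 * x)))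
      (2 * exp (-2 * x) / (2 + 3 * exp (-2 * x))) x := by
    have h := ((((hasDerivAt_id x).const_mul (-2)).exp.const_mul 3).const_add 2).log
      (hpos x).ne'
    refine (h.const_mul (-(1 / 3))).congr_deriv ?_
    simp only [id]
    field_simp
  have hlim : Tendsto (fun x => -(1 / 3) * log (2 + 3 * exp (-2 * x))) atTop
      (𝓝 (-(1 / 3) * log (2 + 3 * 0))) := by
    have hexp : Tendsto (fun x : ℝ => exp (-2 * x)) atTop (𝓝 0) :=
      tendsto_exp_atBot.comp (tendsto_id.const_mul_atTop_of_neg (by norm_num))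
    exact ((continuousAt_log (by norm_num)).tendsto.comp
      (tendsto_const_nhds.add (hexp.const_mul 3))).const_mul _
  rw [integral_Ioi_of_hasDerivAt_of_nonneg' (fun x _ => hderiv x)
    (fun x _ => (div_pos (by positivity) (hpos x)).le) hlim, log_div (by norm_num) (by norm_num)]
  norm_num
  ring

lemma tendsto_betaStar : Tendsto betaStar atTop (𝓝 ((1 / 3) * log (5 / 2))) := by
  rw [← tendsto_add_atTop_iff_nat 2, ← integral_exp_div]
  simp_rw [betaStar_add_two_eq_integral]
  refine tendsto_integral_of_dominated_convergence (fun x => 2 * exp (-2 * x))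
    (fun t => ((integrableOn_padovan_exp t).add (integrableOn_padovan_exp (t + 1))).1)
    ((exp_neg_integrableOn_Ioi 0 two_pos).const_mul 2) (fun t => .of_forall fun x => ?_) ?_
  · have hu := exp_pos (-2 * x)
    have hle : exp (-2 * x) / (1 + exp (-2 * x)) ≤ exp (-2 * x) :=
      div_le_self hu.le (by linarith)
    obtain ⟨h₀, h₁⟩ := padovan_mem_Icc hu.le t
    obtain ⟨h₀', h₁'⟩ := padovan_mem_Icc hu.le (t + 1)
    rw [Real.norm_of_nonneg (by positivity)]
    linarith
  · -- at `x = log 3 / 2`, i.e. `u = 1/3`, the two characteristic roots of `padovan u` coincide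
    filter_upwards [ae_restrict_mem measurableSet_Ioi, Measure.ae_ne _ (log 3 / 2)]
      with x (hx : 0 < x) hne
    have hu₁ : exp (-2 * x) < 1 := exp_lt_one_iff.2 (by linarith)
    have hu₃ : exp (-2 * x) ≠ 1 / 3 := by
      intro h
      apply hne
      have := congrArg log h
      rw [log_exp, one_div, log_inv] at this
      linarith
    have h := tendsto_padovan (exp_pos _) hu₁ hu₃
    have h₂ := h.add (h.comp (tendsto_add_atTop_nat 1))
    rwa [← two_mul, ← mul_div_assoc] at h₂

open Filter in
/-- With `γ*_t = 1/(2β*_t)`, one has `lim_{t→∞} γ*_t = 3/(2 ln(5/2))`; equivalently,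
`lim_{t→∞} β*_t = (1/3) ln(5/2)`. -/
theorem gammaStar_tendsto :
    Tendsto (fun t : ℕ => 1 / (2 * betaStar t)) atTop (nhds (3 / (2 * Real.log (5 / 2)))) ∧
    Tendsto (fun t : ℕ => betaStar t) atTop (nhds ((1 / 3) * Real.log (5 / 2))) := by
  refine ⟨?_, tendsto_betaStar⟩
  have hlog : 0 < log (5 / 2) := log_pos (by norm_num)
  rw [show 3 / (2 * log (5 / 2)) = 1 / (2 * ((1 / 3) * log (5 / 2))) by field_simp]
  exact tendsto_const_nhds.div (tendsto_betaStar.const_mul 2) (by positivity)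
end

section
/- Fix positive integers a, b, c and a constant Δ > 0. As z → 0 within the cone R_Δ := {x + iy : x > 0, |y| ≤ Δx}, one has z · Σ_{m≥0} e^{−amz} / ∏_{i=0}^{c−1}(1 + e^{−(2m+b+2i)z}) → ∫_0^∞ e^{−ax}/(1+e^{−2x})^c dx. Equivalently, setting q = e^{−z} and F_{a,b,c}(q) := Σ_{m≥0} q^{am}/(−q^{2m+b}; q²)_c, one has F_{a,b,c}(e^{−z}) ~ (1/z) ∫_0^∞ e^{−ax}/(1+e^{−2x})^c dx. -/
/-!
Write `z = x (1 + iθ)` with `x = Re z > 0` and `|θ| ≤ Δ`. Then `z F(e^{-z})` is the integral over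
`s > 0` of the step function `(1 + iθ) f_z(⌊s / x⌋)`, where `f_z(m)` is the `m`-th summand, and
`f_z(m)` is close to `g(m z)` with `g(w) = e^{-aw} / (1 + e^{-2w})^c`. Since `|1 + e^{-w}|` is
bounded below on every sector `|Im w| ≤ T Re w`, the summands decay like `e^{-a m x}`, and
dominated convergence shows that, as `(x, θ) → (0, θ₀)`, this integral tends to the ray integral
`∫_0^∞ (1 + iθ₀) g(s (1 + iθ₀)) ds`. The ray integral does not depend on `θ₀`: its derivative
in `θ₀` is the integral of an exact derivative `∂_s (i s g(s (1 + iθ₀)))` that vanishes at both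
ends, so it equals its value `∫_0^∞ g` at `θ₀ = 0`. Compactness of `[-Δ, Δ]` makes the
convergence uniform in `θ`.
-/

open Complex Filter Function MeasureTheory Set Topology

def sector (T : ℝ) : Set ℂ := {w | |w.im| ≤ T * w.re}

lemma re_nonneg_of_mem_sector {T : ℝ} {w : ℂ} (hw : w ∈ sector T) (hT : 0 < T) : 0 ≤ w.re :=
  nonneg_of_mul_nonneg_right ((abs_nonneg _).trans hw) hT

lemma ofReal_mul_mem_sector {T r : ℝ} {w : ℂ} (hr : 0 ≤ r) (hw : w ∈ sector T) :
    (r : ℂ) * w ∈ sector T := by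
  simp only [sector, mem_ofPred_eq, re_ofReal_mul, im_ofReal_mul, abs_mul, abs_of_nonneg hr] at *
  nlinarith

lemma one_add_mul_I_mem_sector {T θ : ℝ} (hθ : |θ| ≤ T) : 1 + θ * I ∈ sector T := by
  simpa [sector] using hθ

lemma norm_one_add_mul_I_le {θ T : ℝ} (hθ : |θ| ≤ T) : ‖1 + (θ : ℂ) * I‖ ≤ 1 + T :=
  (norm_add_le _ _).trans (by simpa using hθ)

lemma exists_pos_le_norm_one_add_exp_neg {T : ℝ} (hT : 0 < T) :
    ∃ δ > 0, ∀ w ∈ sector T, δ ≤ ‖1 + exp (-w)‖ := by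
  refine ⟨1 - Real.exp (-(Real.pi / (2 * T))), by
    simpa using Real.exp_lt_one_iff.2 (neg_lt_zero.2 (by positivity)), fun w hw => ?_⟩
  rcases le_or_gt |w.im| (Real.pi / 2) with hsmall | hlarge
  · -- `exp (-w)` lies in the closed right half-plane, so `1 + exp (-w)` has real part `≥ 1`.
    have hcos : 0 ≤ Real.cos w.im := Real.cos_nonneg_of_mem_Icc (abs_le.1 hsmall)
    calc 1 - Real.exp (-(Real.pi / (2 * T))) ≤ 1 + Real.exp (-w.re) * Real.cos w.im := by
          nlinarith [Real.exp_pos (-(Real.pi / (2 * T))), Real.exp_pos (-w.re)]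
      _ = (1 + exp (-w)).re := by simp [exp_re]
      _ ≤ ‖1 + exp (-w)‖ := re_le_norm _
  · -- otherwise `re w ≥ π / (2T)` and `exp (-w)` is small.
    have hw_re : Real.pi / (2 * T) ≤ w.re := by
      rw [div_le_iff₀ (by positivity)]
      linarith [show |w.im| ≤ T * w.re from hw]
    have hsmall : ‖exp (-w)‖ ≤ Real.exp (-(Real.pi / (2 * T))) := by
      rw [norm_exp, neg_re]
      exact Real.exp_le_exp.2 (neg_le_neg hw_re)
    have := norm_sub_norm_le (1 : ℂ) (-exp (-w))
    rw [sub_neg_eq_add, norm_neg, norm_one] at this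
    linarith

lemma one_add_exp_neg_two_mul_ne_zero {T : ℝ} (hT : 0 < T) {w : ℂ} (hw : w ∈ sector T) :
    1 + exp (-2 * w) ≠ 0 := by
  obtain ⟨δ, hδ, hδle⟩ := exists_pos_le_norm_one_add_exp_neg hT
  have := hδle _ (ofReal_mul_mem_sector zero_le_two hw)
  rw [ofReal_ofNat, ← neg_mul] at this
  exact norm_pos_iff.1 (hδ.trans_le this)

def ExpDecayOnSectors (g : ℂ → ℂ) (a : ℝ) : Prop :=
  ∀ T > 0, ∃ C, ∀ w ∈ sector T, DifferentiableAt ℂ g w ∧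
    ‖g w‖ ≤ C * Real.exp (-a * w.re) ∧ ‖deriv g w‖ ≤ C * Real.exp (-a * w.re)

noncomputable def rayIntegral (g : ℂ → ℂ) (θ : ℝ) : ℂ :=
  ∫ s in Ioi (0 : ℝ), (1 + θ * I) * g (s * (1 + θ * I))

noncomputable def rayIntegrandDeriv (g : ℂ → ℂ) (θ s : ℝ) : ℂ :=
  I * g (s * (1 + θ * I)) + (1 + θ * I) * (s * I) * deriv g (s * (1 + θ * I))

section RayIntegral

variable {g : ℂ → ℂ} {a : ℝ}

lemma hasDerivAt_rayIntegrand {θ s : ℝ} (hg : DifferentiableAt ℂ g (s * (1 + θ * I))) :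
    HasDerivAt (fun θ : ℝ => (1 + θ * I) * g (s * (1 + θ * I))) (rayIntegrandDeriv g θ s) θ := by
  have hdir : HasDerivAt (fun θ : ℝ => 1 + (θ : ℂ) * I) I θ := by
    simpa using ((hasDerivAt_id θ).ofReal_comp.mul_const I).const_add 1
  refine (hdir.mul (hg.hasDerivAt.comp θ (hdir.const_mul (s : ℂ)))).congr_deriv ?_
  simp only [rayIntegrandDeriv, comp_apply]
  ring

/-- The `θ`-derivative of the integrand of `rayIntegral g θ` is an exact `s`-derivative. -/
lemma hasDerivAt_rayPrimitive {θ s : ℝ} (hg : DifferentiableAt ℂ g (s * (1 + θ * I))) :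
    HasDerivAt (fun s : ℝ => I * s * g (s * (1 + θ * I))) (rayIntegrandDeriv g θ s) s := by
  have hs : HasDerivAt (fun s : ℝ => (s : ℂ)) 1 s := by simpa using (hasDerivAt_id s).ofReal_comp
  refine ((hs.const_mul I).mul (hg.hasDerivAt.comp s (hs.mul_const (1 + θ * I)))).congr_deriv ?_
  simp only [rayIntegrandDeriv, comp_apply]
  ring

lemma norm_rayIntegrandDeriv_le {C T θ s : ℝ} (hθ : |θ| ≤ T) (hs : 0 ≤ s)
    (hg : ‖g (s * (1 + θ * I))‖ ≤ C * Real.exp (-a * s))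
    (hg' : ‖deriv g (s * (1 + θ * I))‖ ≤ C * Real.exp (-a * s)) :
    ‖rayIntegrandDeriv g θ s‖ ≤ C * Real.exp (-a * s) + (1 + T) * C * (s * Real.exp (-a * s)) := by
  have hC : 0 ≤ C := nonneg_of_mul_nonneg_left ((norm_nonneg _).trans hg) (Real.exp_pos _)
  calc ‖rayIntegrandDeriv g θ s‖
      ≤ ‖g (s * (1 + θ * I))‖ + ‖1 + (θ : ℂ) * I‖ * s * ‖deriv g (s * (1 + θ * I))‖ := by
        refine (norm_add_le _ _).trans_eq ?_
        simp [abs_of_nonneg hs]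
    _ ≤ C * Real.exp (-a * s) + (1 + T) * s * (C * Real.exp (-a * s)) := by
        have hdir := norm_one_add_mul_I_le hθ
        have hT : 0 ≤ T := (abs_nonneg θ).trans hθ
        gcongr
    _ = _ := by ring

lemma integrableOn_mul_exp_neg_mul (ha : 0 < a) :
    IntegrableOn (fun s : ℝ => s * Real.exp (-a * s)) (Ioi 0) := by
  simpa using integrableOn_rpow_mul_exp_neg_mul_rpow (s := 1) (p := 1) (by norm_num) one_pos ha

lemma tendsto_mul_exp_neg_mul_atTop (ha : 0 < a) :
    Tendsto (fun s : ℝ => s * Real.exp (-a * s)) atTop (𝓝 0) := by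
  simpa using tendsto_rpow_mul_exp_neg_mul_atTop_nhds_zero 1 a ha

lemma ExpDecayOnSectors.along_ray (hg : ExpDecayOnSectors g a) {T : ℝ} (hT : 0 < T) :
    ∃ C, ∀ θ : ℝ, |θ| ≤ T → ∀ s : ℝ, 0 ≤ s → DifferentiableAt ℂ g (s * (1 + θ * I)) ∧
      ‖g (s * (1 + θ * I))‖ ≤ C * Real.exp (-a * s) ∧
      ‖deriv g (s * (1 + θ * I))‖ ≤ C * Real.exp (-a * s) := by
  obtain ⟨C, hC⟩ := hg T hT
  refine ⟨C, fun θ hθ s hs => ?_⟩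
  simpa using hC _ (ofReal_mul_mem_sector hs (one_add_mul_I_mem_sector hθ))

lemma integral_rayIntegrandDeriv_eq_zero (ha : 0 < a) (hg : ExpDecayOnSectors g a) (θ : ℝ)
    (hint : IntegrableOn (rayIntegrandDeriv g θ) (Ioi 0)) :
    ∫ s in Ioi (0 : ℝ), rayIntegrandDeriv g θ s = 0 := by
  obtain ⟨C, hC⟩ := hg.along_ray (T := |θ| + 1) (by positivity)
  have hray := fun s (hs : 0 ≤ s) => hC θ (by linarith) s hs
  have hcont : ContinuousWithinAt (fun s : ℝ => I * s * g (s * (1 + θ * I))) (Ici 0) 0 :=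
    (hasDerivAt_rayPrimitive (hray 0 le_rfl).1).continuousAt.continuousWithinAt
  have hlim : Tendsto (fun s : ℝ => I * s * g (s * (1 + θ * I))) atTop (𝓝 0) := by
    refine squeeze_zero_norm' ?_
      (by simpa only [mul_zero] using (tendsto_mul_exp_neg_mul_atTop ha).const_mul C)
    filter_upwards [eventually_ge_atTop 0] with s hs
    calc ‖I * s * g (s * (1 + θ * I))‖ = s * ‖g (s * (1 + θ * I))‖ := by
          simp [abs_of_nonneg hs]
      _ ≤ s * (C * Real.exp (-a * s)) := by gcongr; exact (hray s hs).2.1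
      _ = C * (s * Real.exp (-a * s)) := by ring
  rw [integral_Ioi_of_hasDerivAt_of_tendsto hcont
    (fun s hs => hasDerivAt_rayPrimitive (hray s (le_of_lt hs)).1) hint hlim]
  simp

lemma hasDerivAt_rayIntegral (ha : 0 < a) (hg : ExpDecayOnSectors g a) (θ₀ : ℝ) :
    HasDerivAt (rayIntegral g) 0 θ₀ := by
  set T := |θ₀| + 1
  obtain ⟨C, hC⟩ := hg.along_ray (T := T) (by positivity)
  have hball : ∀ θ ∈ Metric.ball θ₀ 1, |θ| ≤ T := fun θ hθ => by
    have := abs_sub_abs_le_abs_sub θ θ₀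
    rw [Metric.mem_ball, Real.dist_eq] at hθ
    linarith
  have hθ₀ : |θ₀| ≤ T := by linarith
  have hmeas : ∀ θ, |θ| ≤ T →
      AEStronglyMeasurable (fun s : ℝ => g (s * (1 + θ * I))) (volume.restrict (Ioi 0)) := by
    refine fun θ hθ => ContinuousOn.aestronglyMeasurable (fun s hs => ?_) measurableSet_Ioi
    exact (ContinuousAt.comp (f := fun s : ℝ => (s : ℂ) * (1 + θ * I))
      (hC θ hθ s (le_of_lt hs)).1.continuousAt (by fun_prop)).continuousWithinAt
  have hderiv_meas : AEStronglyMeasurable (rayIntegrandDeriv g θ₀) (volume.restrict (Ioi 0)) :=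
    ((hmeas θ₀ hθ₀).const_mul I).add <| (Continuous.aestronglyMeasurable (by fun_prop)).mul
      ((measurable_deriv g).comp (by fun_prop)).aestronglyMeasurable
  have hint₀ : IntegrableOn (fun s : ℝ => (1 + θ₀ * I) * g (s * (1 + θ₀ * I))) (Ioi 0) := by
    refine Integrable.mono' ((exp_neg_integrableOn_Ioi 0 ha).const_mul ((1 + T) * C))
      ((hmeas θ₀ hθ₀).const_mul _) ?_
    filter_upwards [ae_restrict_mem measurableSet_Ioi] with s hs
    rw [norm_mul, mul_assoc]
    exact mul_le_mul (norm_one_add_mul_I_le hθ₀) (hC θ₀ hθ₀ s (le_of_lt hs)).2.1 (norm_nonneg _)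
      (by positivity)
  obtain ⟨hint, hderiv⟩ := hasDerivAt_integral_of_dominated_loc_of_deriv_le
    (F := fun (θ s : ℝ) => (1 + θ * I) * g (s * (1 + θ * I))) (Metric.ball_mem_nhds θ₀ one_pos)
    (eventually_of_mem (Metric.ball_mem_nhds θ₀ one_pos) fun θ hθ =>
      (hmeas θ (hball θ hθ)).const_mul _) hint₀ hderiv_meas
    (bound := fun s => C * Real.exp (-a * s) + (1 + T) * C * (s * Real.exp (-a * s)))
    (by
      filter_upwards [ae_restrict_mem measurableSet_Ioi] with s hs θ hθ
      exact norm_rayIntegrandDeriv_le (hball θ hθ) (le_of_lt hs) (hC θ (hball θ hθ) s hs.le).2.1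
        (hC θ (hball θ hθ) s hs.le).2.2)
    (((exp_neg_integrableOn_Ioi 0 ha).const_mul C).add
      ((integrableOn_mul_exp_neg_mul ha).const_mul _))
    (by
      filter_upwards [ae_restrict_mem measurableSet_Ioi] with s hs θ hθ
      exact hasDerivAt_rayIntegrand (hC θ (hball θ hθ) s hs.le).1)
  rwa [integral_rayIntegrandDeriv_eq_zero ha hg θ₀ hint] at hderiv

lemma rayIntegral_eq_rayIntegral_zero (ha : 0 < a)
    (hg : ExpDecayOnSectors g a) (θ : ℝ) : rayIntegral g θ = rayIntegral g 0 :=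
  is_const_of_deriv_eq_zero (fun θ => (hasDerivAt_rayIntegral ha hg θ).differentiableAt)
    (fun θ => (hasDerivAt_rayIntegral ha hg θ).deriv) θ 0

end RayIntegral

noncomputable def icalIntegrand (a c : ℕ) (w : ℂ) : ℂ :=
  exp (-a * w) / (1 + exp (-2 * w)) ^ c

lemma hasDerivAt_icalIntegrand {a c : ℕ} {w : ℂ} (hw : 1 + exp (-2 * w) ≠ 0) :
    HasDerivAt (icalIntegrand a c)
      (-a * icalIntegrand a c w + 2 * c * exp (-(a + 2) * w) / (1 + exp (-2 * w)) ^ (c + 1)) w := by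
  have hexp : ∀ k : ℂ, HasDerivAt (fun w => exp (k * w)) (k * exp (k * w)) w := fun k => by
    simpa [mul_comm] using ((hasDerivAt_id w).const_mul k).cexp
  refine ((hexp _).div (((hexp _).const_add 1).pow c) (pow_ne_zero c hw)).congr_deriv ?_
  have hsplit : exp (-(a + 2) * w) = exp (-a * w) * exp (-2 * w) := by
    rw [← Complex.exp_add]; ring_nf
  rw [icalIntegrand, hsplit]
  rcases c with _ | c
  · simp
  · simp only [Pi.pow_apply]
    generalize exp (-2 * w) = E at hw ⊢
    field_simp
    push_cast
    ring

lemma expDecayOnSectors_icalIntegrand (a c : ℕ) : ExpDecayOnSectors (icalIntegrand a c) a := by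
  intro T hT
  obtain ⟨δ, hδ, hδle⟩ := exists_pos_le_norm_one_add_exp_neg hT
  refine ⟨(1 + a) * (δ ^ c)⁻¹ + 2 * c * (δ ^ (c + 1))⁻¹, fun w hw => ?_⟩
  have hre := re_nonneg_of_mem_sector hw hT
  have hD : δ ≤ ‖1 + exp (-2 * w)‖ := by
    simpa [neg_mul] using hδle _ (ofReal_mul_mem_sector zero_le_two hw)
  have hne : 1 + exp (-2 * w) ≠ 0 := norm_pos_iff.1 (hδ.trans_le hD)
  have hdiv : ∀ (z : ℂ) (k : ℕ), ‖z / (1 + exp (-2 * w)) ^ k‖ ≤ (δ ^ k)⁻¹ * ‖z‖ := fun z k => by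
    rw [norm_div, norm_pow, div_eq_inv_mul]
    gcongr
  have hE : ∀ k : ℝ, 0 ≤ k → ‖exp (-(a + k : ℂ) * w)‖ ≤ Real.exp (-a * w.re) := fun k hk => by
    rw [norm_exp]
    exact Real.exp_le_exp.2 (by simp; nlinarith)
  have hg : ‖icalIntegrand a c w‖ ≤ (δ ^ c)⁻¹ * Real.exp (-a * w.re) :=
    (hdiv _ c).trans (by simpa using mul_le_mul_of_nonneg_left (hE 0 le_rfl) (by positivity))
  have hg' : ‖2 * c * exp (-(a + 2) * w) / (1 + exp (-2 * w)) ^ (c + 1)‖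
      ≤ 2 * c * (δ ^ (c + 1))⁻¹ * Real.exp (-a * w.re) := by
    refine (hdiv _ _).trans ?_
    rw [norm_mul, mul_comm (2 * (c : ℝ)), mul_assoc]
    gcongr
    · simp
    · exact_mod_cast hE 2 zero_le_two
  refine ⟨(hasDerivAt_icalIntegrand hne).differentiableAt, hg.trans ?_, ?_⟩
  · gcongr
    nlinarith [inv_nonneg.2 (pow_nonneg hδ.le c), inv_nonneg.2 (pow_nonneg hδ.le (c + 1))]
  · rw [(hasDerivAt_icalIntegrand hne).deriv]
    calc _ ≤ a * ‖icalIntegrand a c w‖ + 2 * c * (δ ^ (c + 1))⁻¹ * Real.exp (-a * w.re) :=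
          (norm_add_le _ _).trans (by gcongr; simp)
      _ ≤ _ := by
        have : 0 ≤ (δ ^ c)⁻¹ * Real.exp (-a * w.re) := by positivity
        nlinarith

lemma rayIntegral_icalIntegrand_zero (a c : ℕ) : rayIntegral (icalIntegrand a c) 0 = Ical a c := by
  rw [rayIntegral, Ical, ← integral_complex_ofReal]
  refine setIntegral_congr_fun measurableSet_Ioi fun s _ => ?_
  simp [icalIntegrand]

lemma setIntegral_Ico_comp_natFloor {E : Type*} [NormedAddCommGroup E] [NormedSpace ℝ E]
    [CompleteSpace E] (f : ℕ → E) (m : ℕ) : ∫ u in Ico (m : ℝ) (m + 1), f ⌊u⌋₊ = f m := by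
  rw [setIntegral_congr_fun measurableSet_Ico fun u hu => congrArg f (Nat.floor_eq_on_Ico m u hu)]
  simp

lemma integral_comp_natFloor {E : Type*} [NormedAddCommGroup E] [NormedSpace ℝ E]
    [CompleteSpace E] {f : ℕ → E} (hf : Summable fun m => ‖f m‖) :
    ∫ u in Ioi (0 : ℝ), f ⌊u⌋₊ = ∑' m, f m := by
  have hcover : ⋃ m : ℕ, Ico (m : ℝ) (m + 1) = Ici 0 := by
    ext u
    simp only [mem_iUnion, mem_Ico, mem_Ici]
    exact ⟨fun ⟨m, hm, _⟩ => (Nat.cast_nonneg m).trans hm,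
      fun hu => ⟨⌊u⌋₊, Nat.floor_le hu, Nat.lt_floor_add_one u⟩⟩
  have hdisj : Pairwise (Disjoint on fun m : ℕ => Ico (m : ℝ) (m + 1)) := fun m n hmn =>
    disjoint_left.2 fun u hm hn => hmn ((Nat.floor_eq_on_Ico m u hm).symm.trans
      (Nat.floor_eq_on_Ico n u hn))
  have hint : IntegrableOn (fun u : ℝ => f ⌊u⌋₊) (⋃ m : ℕ, Ico (m : ℝ) (m + 1)) := by
    refine integrableOn_iUnion_of_summable_integral_norm (fun m => ?_) ?_
    · refine (integrableOn_const (C := f m) (by simp)).congr_fun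
        (fun u hu => congrArg f (Nat.floor_eq_on_Ico m u hu).symm) measurableSet_Ico
    · simpa only [setIntegral_Ico_comp_natFloor fun m => ‖f m‖] using hf
  rw [← integral_Ici_eq_integral_Ioi, ← hcover,
    integral_iUnion (fun _ => measurableSet_Ico) hdisj hint]
  simp only [setIntegral_Ico_comp_natFloor]

lemma integral_comp_natFloor_div {E : Type*} [NormedAddCommGroup E] [NormedSpace ℝ E]
    [CompleteSpace E] {f : ℕ → E} (hf : Summable fun m => ‖f m‖) {x : ℝ} (hx : 0 < x) :
    ∫ s in Ioi (0 : ℝ), f ⌊s / x⌋₊ = x • ∑' m, f m := by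
  have := integral_comp_mul_left_Ioi (fun u => f ⌊u⌋₊) 0 (inv_pos.2 hx)
  simp only [mul_zero, inv_inv] at this
  simp only [div_eq_inv_mul, this, integral_comp_natFloor hf]

noncomputable def fabcTerm (a b c : ℕ) (z : ℂ) (m : ℕ) : ℂ :=
  exp (-((a * m : ℕ) : ℂ) * z) /
    ∏ i ∈ Finset.range c, (1 + exp (-((2 * m + b + 2 * i : ℕ) : ℂ) * z))

section FabcTerm

variable {a b c : ℕ}

lemma exists_norm_fabcTerm_le {T : ℝ} (hT : 0 < T) :
    ∃ C, ∀ z ∈ sector T, ∀ m : ℕ, ‖fabcTerm a b c z m‖ ≤ C * Real.exp (-(a * m * z.re)) := by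
  obtain ⟨δ, hδ, hδle⟩ := exists_pos_le_norm_one_add_exp_neg hT
  refine ⟨(δ ^ c)⁻¹, fun z hz m => ?_⟩
  have hden : δ ^ c ≤ ‖∏ i ∈ Finset.range c, (1 + exp (-((2 * m + b + 2 * i : ℕ) : ℂ) * z))‖ := by
    rw [norm_prod]
    refine (Finset.prod_le_prod (fun _ _ => hδ.le) fun i _ => ?_).trans_eq' (by simp)
    have := hδle _ (ofReal_mul_mem_sector (Nat.cast_nonneg (2 * m + b + 2 * i)) hz)
    rwa [ofReal_natCast, ← neg_mul] at this
  rw [fabcTerm, norm_div, norm_exp, div_eq_inv_mul]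
  gcongr
  simp

lemma summable_norm_fabcTerm (ha : 0 < a) {T : ℝ} (hT : 0 < T) {z : ℂ} (hz : z ∈ sector T)
    (hre : 0 < z.re) : Summable fun m => ‖fabcTerm a b c z m‖ := by
  obtain ⟨C, hC⟩ := exists_norm_fabcTerm_le (a := a) (b := b) (c := c) hT
  have hr : Real.exp (-(a * z.re)) < 1 := Real.exp_lt_one_iff.2 (by simp; positivity)
  refine Summable.of_nonneg_of_le (fun _ => norm_nonneg _) (fun m => (hC z hz m).trans_eq ?_)
    ((summable_geometric_of_lt_one (Real.exp_pos _).le hr).mul_left C)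
  rw [← Real.exp_nat_mul]
  ring_nf

lemma fabcTerm_eq (z : ℂ) (m : ℕ) : fabcTerm a b c z m =
    exp (-a * (m * z)) / ∏ i ∈ Finset.range c, (1 + exp (-(2 * (m * z) + (b + 2 * i) * z))) := by
  simp only [fabcTerm]
  push_cast
  ring_nf

lemma tendsto_fabcTerm {ι : Type*} {l : Filter ι} {z : ι → ℂ} {m : ι → ℕ} {w₀ : ℂ}
    (hz : Tendsto z l (𝓝 0)) (hmz : Tendsto (fun n => (m n : ℂ) * z n) l (𝓝 w₀))
    (hw₀ : 1 + exp (-2 * w₀) ≠ 0) :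
    Tendsto (fun n => fabcTerm a b c (z n) (m n)) l (𝓝 (icalIntegrand a c w₀)) := by
  have hpow : (1 + exp (-2 * w₀)) ^ c = ∏ _i ∈ Finset.range c, (1 + exp (-2 * w₀)) := by simp
  simp only [fabcTerm_eq, icalIntegrand, hpow]
  refine ((hmz.const_mul _).cexp).div (tendsto_finsetProd _ fun i _ => ?_)
    (Finset.prod_ne_zero_iff.2 fun _ _ => hw₀)
  simpa using (((hmz.const_mul 2).add (hz.const_mul _)).neg.cexp).const_add 1

end FabcTerm

lemma eq_re_mul_one_add_mul_I {z : ℂ} (hz : z.re ≠ 0) :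
    z = z.re * (1 + (z.im / z.re : ℝ) * I) := by
  apply Complex.ext <;> simp [field]

lemma tendsto_natFloor_div_mul_nhdsGT_zero {s : ℝ} (hs : 0 ≤ s) :
    Tendsto (fun x : ℝ => ⌊s / x⌋₊ * x) (𝓝[>] 0) (𝓝 s) := by
  have hlower : Tendsto (fun x : ℝ => s - x) (𝓝[>] 0) (𝓝 s) :=
    tendsto_nhdsWithin_of_tendsto_nhds (by simpa using (tendsto_id (x := 𝓝 (0 : ℝ))).const_sub s)
  refine tendsto_of_tendsto_of_tendsto_of_le_of_le' hlower tendsto_const_nhds ?_ ?_ <;>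
    filter_upwards [self_mem_nhdsWithin] with x (hx : 0 < x)
  · have := mul_lt_mul_of_pos_right (Nat.sub_one_lt_floor (s / x)) hx
    rw [sub_mul, div_mul_cancel₀ _ hx.ne', one_mul] at this
    exact this.le
  · calc ⌊s / x⌋₊ * x ≤ s / x * x := by gcongr; exact Nat.floor_le (by positivity)
      _ = s := div_mul_cancel₀ _ hx.ne'

noncomputable def stepIntegral (a b c : ℕ) (p : ℝ × ℝ) : ℂ :=
  ∫ s in Ioi (0 : ℝ), (1 + p.2 * I) * fabcTerm a b c (p.1 * (1 + p.2 * I)) ⌊s / p.1⌋₊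

section StepIntegral

variable {a b c : ℕ}

lemma mul_tsum_fabcTerm_eq_stepIntegral (ha : 0 < a) {T : ℝ} (hT : 0 < T) {z : ℂ}
    (hz : z ∈ sector T) (hre : 0 < z.re) :
    z * ∑' m, fabcTerm a b c z m = stepIntegral a b c (z.re, z.im / z.re) := by
  have hsum := (summable_norm_fabcTerm (b := b) (c := c) ha hT hz hre).mul_left
    ‖1 + (z.im / z.re : ℝ) * I‖
  simp only [← norm_mul] at hsum
  rw [stepIntegral, ← eq_re_mul_one_add_mul_I hre.ne', integral_comp_natFloor_div hsum hre,
    tsum_mul_left, real_smul, ← mul_assoc, ← eq_re_mul_one_add_mul_I hre.ne']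

lemma tendsto_stepIntegral (ha : 0 < a) (θ₀ : ℝ) :
    Tendsto (stepIntegral a b c) (𝓝[Ioi 0 ×ˢ univ] (0, θ₀))
      (𝓝 (rayIntegral (icalIntegrand a c) θ₀)) := by
  set l := 𝓝[Ioi (0 : ℝ) ×ˢ univ] (0, θ₀)
  set T := |θ₀| + 1
  have ha' : (0 : ℝ) < a := Nat.cast_pos.2 ha
  obtain ⟨C, hC⟩ := exists_norm_fabcTerm_le (a := a) (b := b) (c := c) (T := T) (by positivity)
  have hfst : Tendsto Prod.fst l (𝓝[>] 0) := tendsto_nhdsWithin_iff.2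
    ⟨(continuous_fst.tendsto _).mono_left nhdsWithin_le_nhds,
      eventually_mem_nhdsWithin.mono fun p hp => hp.1⟩
  have hsnd : Tendsto Prod.snd l (𝓝 θ₀) := (continuous_snd.tendsto _).mono_left nhdsWithin_le_nhds
  have hdir : Tendsto (fun p : ℝ × ℝ => 1 + p.2 * I) l (𝓝 (1 + θ₀ * I)) :=
    ((continuous_ofReal.tendsto _).comp hsnd |>.mul_const I).const_add 1
  have hsmall : ∀ᶠ p in l, p.1 ∈ Ioo 0 1 ∧ |p.2| ≤ T :=
    (hfst.eventually_mem (Ioo_mem_nhdsGT one_pos)).and <|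
      ((continuous_abs.tendsto _).comp hsnd).eventually_le_const (lt_add_one |θ₀|)
  refine tendsto_integral_filter_of_dominated_convergence
    (fun s => (1 + T) * C * Real.exp a * Real.exp (-a * s)) ?_ ?_ ?_ ?_
  · refine Eventually.of_forall fun p => Measurable.aestronglyMeasurable ?_
    exact measurable_const.mul ((measurable_from_top (f := fabcTerm a b c _)).comp
      (Nat.measurable_floor.comp (measurable_id.div_const _)))
  · filter_upwards [hsmall] with p ⟨⟨hx, hx1⟩, hθ⟩
    filter_upwards [ae_restrict_mem measurableSet_Ioi] with s (hs : 0 < s)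
    have hz := ofReal_mul_mem_sector hx.le (one_add_mul_I_mem_sector hθ)
    have hfloor : s - 1 ≤ ⌊s / p.1⌋₊ * p.1 := by
      have := mul_lt_mul_of_pos_right (Nat.sub_one_lt_floor (s / p.1)) hx
      rw [sub_mul, div_mul_cancel₀ _ hx.ne', one_mul] at this
      nlinarith
    have hexp : Real.exp (-(a * ⌊s / p.1⌋₊ * p.1)) ≤ Real.exp a * Real.exp (-a * s) := by
      rw [← Real.exp_add]
      exact Real.exp_le_exp.2 (by nlinarith)
    have hCnn : 0 ≤ C := nonneg_of_mul_nonneg_left ((norm_nonneg _).trans (hC _ hz 0))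
      (Real.exp_pos _)
    rw [norm_mul, mul_assoc, mul_assoc]
    refine mul_le_mul (norm_one_add_mul_I_le hθ) ?_ (norm_nonneg _) (by positivity)
    refine (hC _ hz _).trans ?_
    have hre : ((p.1 : ℂ) * (1 + p.2 * I)).re = p.1 := by simp
    rw [hre]
    exact mul_le_mul_of_nonneg_left hexp hCnn
  · exact (exp_neg_integrableOn_Ioi 0 ha').const_mul _
  · filter_upwards [ae_restrict_mem measurableSet_Ioi] with s (hs : 0 < s)
    have hw₀ := one_add_exp_neg_two_mul_ne_zero (T := T) (by positivity)
      (ofReal_mul_mem_sector hs.le (one_add_mul_I_mem_sector (θ := θ₀) (by simp [T])))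
    refine hdir.mul (tendsto_fabcTerm ?_ ?_ hw₀)
    · simpa using
        ((continuous_ofReal.tendsto 0).comp (hfst.mono_right nhdsWithin_le_nhds)).mul hdir
    · refine (((continuous_ofReal.tendsto s).comp
        ((tendsto_natFloor_div_mul_nhdsGT_zero hs.le).comp hfst)).mul hdir).congr fun p => ?_
      simp only [comp_apply, ofReal_mul, ofReal_natCast]
      ring

end StepIntegral

lemma tendsto_nhdsWithin_prod_principal_of_isCompact {X Y Z : Type*} [TopologicalSpace X]
    [TopologicalSpace Y] [TopologicalSpace Z] {f : X × Y → Z} {s : Set X} {K : Set Y}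
    (hK : IsCompact K) {x₀ : X} {z : Z} (h : ∀ y ∈ K, Tendsto f (𝓝[s ×ˢ univ] (x₀, y)) (𝓝 z)) :
    Tendsto f (𝓝[s] x₀ ×ˢ 𝓟 K) (𝓝 z) := by
  intro U hU
  have htube : ∀ᶠ x in 𝓝 x₀, ∀ y ∈ K, x ∈ s → f (x, y) ∈ U :=
    hK.eventually_forall_of_forall_eventually fun y hy =>
      (eventually_nhdsWithin_iff.1 (h y hy hU)).mono fun p hp hps => hp ⟨hps, trivial⟩
  rw [mem_map, mem_prod_principal]
  filter_upwards [nhdsWithin_le_nhds htube, self_mem_nhdsWithin] with x hx hxs y hy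
    using hx y hy hxs

open Filter in
theorem Fabc_asymptotic_general (a b c : ℕ) (ha : 0 < a)
    (Δ : ℝ) (hΔ : 0 < Δ) :
    Tendsto
      (fun z : ℂ => z *
        ∑' m : ℕ, Complex.exp (-((a * m : ℕ) : ℂ) * z) /
          ∏ i ∈ Finset.range c, (1 + Complex.exp (-(((2 * m + b + 2 * i : ℕ)) : ℂ) * z)))
      (nhdsWithin 0 {z : ℂ | 0 < z.re ∧ |z.im| ≤ Δ * z.re})
      (nhds ((Ical a c : ℝ) : ℂ)) := by
  have hstep : Tendsto (stepIntegral a b c) (𝓝[>] 0 ×ˢ 𝓟 (Icc (-Δ) Δ)) (𝓝 (Ical a c)) :=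
    tendsto_nhdsWithin_prod_principal_of_isCompact isCompact_Icc fun θ _ => by
      have := tendsto_stepIntegral (b := b) (c := c) ha θ
      rwa [rayIntegral_eq_rayIntegral_zero (Nat.cast_pos.2 ha)
        (expDecayOnSectors_icalIntegrand a c), rayIntegral_icalIntegrand_zero] at this
  have hcoord : Tendsto (fun z : ℂ => (z.re, z.im / z.re))
      (𝓝[{z : ℂ | 0 < z.re ∧ |z.im| ≤ Δ * z.re}] 0) (𝓝[>] 0 ×ˢ 𝓟 (Icc (-Δ) Δ)) := by
    refine (tendsto_nhdsWithin_iff.2 ⟨?_, ?_⟩).prodMk (tendsto_principal.2 ?_)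
    · simpa using (continuous_re.tendsto 0).mono_left nhdsWithin_le_nhds
    · exact eventually_nhdsWithin_of_forall fun z hz => hz.1
    · refine eventually_nhdsWithin_of_forall fun z hz => abs_le.1 ?_
      rw [abs_div, abs_of_pos hz.1, div_le_iff₀ hz.1]
      exact hz.2
  refine (hstep.comp hcoord).congr' ?_
  filter_upwards [self_mem_nhdsWithin] with z hz
  exact (mul_tsum_fabcTerm_eq_stepIntegral ha hΔ hz.2 hz.1).symm

open Filter in
/-- As `z → 0` in the cone `R_Δ = {x+iy : x > 0, |y| ≤ Δx}`, one has
`z · F_{a,b,c}(e^{−z}) → ∫_0^∞ e^{−ax}/(1+e^{−2x})^c dx`, where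
`F_{a,b,c}(q) = Σ_{m≥0} q^{am}/(−q^{2m+b}; q²)_c`. -/
theorem Fabc_asymptotic (a b c : ℕ) (ha : 0 < a) (hb : 0 < b) (hc : 0 < c)
    (Δ : ℝ) (hΔ : 0 < Δ) :
    Tendsto
      (fun z : ℂ => z *
        ∑' m : ℕ, Complex.exp (-((a * m : ℕ) : ℂ) * z) /
          ∏ i ∈ Finset.range c, (1 + Complex.exp (-(((2 * m + b + 2 * i : ℕ)) : ℂ) * z)))
      (nhdsWithin 0 {z : ℂ | 0 < z.re ∧ |z.im| ≤ Δ * z.re})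
      (nhds ((Ical a c : ℝ) : ℂ)) :=
  Fabc_asymptotic_general a b c ha Δ hΔ
end

section
/- For every constant Δ > 0 there exist constants C > 0 and ε > 0, depending only on Δ, such that for all complex z = x + iy with x > 0 and Δx ≤ |y| ≤ π, one has |ξ(e^{−z})| ≤ C · ξ(e^{−x}) · e^{−ε/x}, where ξ(q) := ∏_{j≥1}(1 + q^{2j−1}). -/
/-!
For `‖w‖ ≤ 1` one has `‖1 + w‖ ≤ (1 + ‖w‖) exp (-(‖w‖ - re w) / 4)`, so factor by factor
`‖ξ(q)‖ ≤ ξ(‖q‖) exp (-S(q) / 4)` with `S(q) = ∑ⱼ (‖q‖ ^ (2j+1) - re q ^ (2j+1))`, and summing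
the geometric series, `S(q) = ‖q‖ / (1 - ‖q‖²) - re (q / (1 - q²))`. For `q = e^{-z}` on the minor
arc, `S(q) ≫ 1/x`: if `cos y < 0` the second term is nonpositive and the first is about `1/(2x)`;
otherwise the closed form gives `S(q) ≥ ‖q‖ (1 - cos y) / ((1 - ‖q‖²) |1 - q²|²)`, where
`1 - cos y ≫ y²`, `1 - ‖q‖² ≤ 2x` and `|1 - q²|² ≪ x² + y² ≪ y²` because `|y| ≥ Δx`.
So `C = 1` works.
-/

open Real Complex

lemma norm_one_add_le_mul_exp {w : ℂ} (hw : ‖w‖ ≤ 1) :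
    ‖1 + w‖ ≤ (1 + ‖w‖) * rexp (-((‖w‖ - w.re) / 4)) := by
  have hre : w.re ≤ ‖w‖ := re_le_norm w
  have hexp : 1 - (‖w‖ - w.re) / 2 ≤ rexp (-((‖w‖ - w.re) / 2)) := by
    linarith [add_one_le_exp (-((‖w‖ - w.re) / 2))]
  have hsq_lhs : ‖1 + w‖ ^ 2 = 1 + 2 * w.re + ‖w‖ ^ 2 := by
    rw [Complex.sq_norm, Complex.sq_norm, normSq_apply, normSq_apply]
    simp only [add_re, one_re, add_im, one_im]
    ring
  have hsq_rhs : ((1 + ‖w‖) * rexp (-((‖w‖ - w.re) / 4))) ^ 2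
      = (1 + ‖w‖) ^ 2 * rexp (-((‖w‖ - w.re) / 2)) := by
    rw [mul_pow, ← Real.exp_nat_mul]
    ring_nf
  refine pow_le_pow_iff_left₀ (norm_nonneg _) (by positivity) two_ne_zero |>.mp ?_
  rw [hsq_lhs, hsq_rhs]
  -- `(1 + ‖w‖)² ≤ 4` is what makes the constant `1/4` work.
  have hpoly : 1 + 2 * w.re + ‖w‖ ^ 2 ≤ (1 + ‖w‖) ^ 2 * (1 - (‖w‖ - w.re) / 2) := by
    nlinarith [mul_nonneg (sub_nonneg.2 hre)
      (by nlinarith [norm_nonneg w] : (0 : ℝ) ≤ 4 - (1 + ‖w‖) ^ 2)]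
  exact hpoly.trans (mul_le_mul_of_nonneg_left hexp (by positivity))

lemma norm_tprod_one_add_le {ι : Type*} {w : ι → ℂ} (hw : Summable (‖w ·‖))
    (hw1 : ∀ i, ‖w i‖ ≤ 1) :
    ‖∏' i, (1 + w i)‖ ≤ (∏' i, (1 + ‖w i‖)) * rexp (-(∑' i, (‖w i‖ - (w i).re)) / 4) := by
  have hdeficit : HasSum (fun i => -((‖w i‖ - (w i).re) / 4))
      (-(∑' i, (‖w i‖ - (w i).re)) / 4) := by
    rw [neg_div]
    exact ((hw.sub (hasSum_re hw.of_norm.hasSum).summable).hasSum.div_const 4).neg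
  have hbound := (Real.multipliable_one_add_of_summable hw).hasProd.mul hdeficit.rexp
  exact le_of_tendsto_of_tendsto' (multipliable_one_add_of_summable hw).hasProd.norm hbound
    fun _ => Finset.prod_le_prod (fun _ _ => norm_nonneg _)
      fun i _ => norm_one_add_le_mul_exp (hw1 i)

lemma hasSum_pow_two_mul_add_one {K : Type*} [NormedDivisionRing K] {q : K} (hq : ‖q‖ < 1) :
    HasSum (fun n : ℕ => q ^ (2 * n + 1)) (q / (1 - q ^ 2)) := by
  have hq2 : ‖q ^ 2‖ < 1 := by rw [norm_pow]; nlinarith [norm_nonneg q]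
  simpa only [pow_succ', pow_mul, div_eq_mul_inv] using
    (hasSum_geometric_of_norm_lt_one hq2).mul_left q

lemma hasSum_norm_pow_two_mul_add_one {K : Type*} [NormedDivisionRing K] {q : K}
    (hq : ‖q‖ < 1) :
    HasSum (fun j : ℕ => ‖q ^ (2 * j + 1)‖) (‖q‖ / (1 - ‖q‖ ^ 2)) := by
  simpa only [norm_pow] using hasSum_pow_two_mul_add_one (q := ‖q‖) (by rwa [norm_norm])

lemma normSq_one_sub_sq (q : ℂ) : normSq (1 - q ^ 2) = (1 - ‖q‖ ^ 2) ^ 2 + 4 * q.im ^ 2 := by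
  rw [Complex.sq_norm, normSq_apply, normSq_apply]
  simp only [sub_re, sub_im, one_re, one_im, pow_two, mul_re, mul_im]
  ring

lemma re_div_one_sub_sq (q : ℂ) :
    (q / (1 - q ^ 2)).re = (1 - ‖q‖ ^ 2) * q.re / normSq (1 - q ^ 2) := by
  rw [div_re, ← add_div, Complex.sq_norm, normSq_apply q]
  congr 1
  simp only [sub_re, sub_im, one_re, one_im, pow_two, mul_re, mul_im]
  ring

noncomputable def oddPowDeficit (q : ℂ) : ℝ := ‖q‖ / (1 - ‖q‖ ^ 2) - (q / (1 - q ^ 2)).re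

lemma hasSum_oddPowDeficit {q : ℂ} (hq : ‖q‖ < 1) :
    HasSum (fun j : ℕ => ‖q ^ (2 * j + 1)‖ - (q ^ (2 * j + 1)).re) (oddPowDeficit q) :=
  (hasSum_norm_pow_two_mul_add_one hq).sub (hasSum_re (hasSum_pow_two_mul_add_one hq))

lemma div_le_oddPowDeficit {q : ℂ} {D : ℝ} (hq : ‖q‖ < 1) (hre : 0 ≤ q.re)
    (hD : (1 - ‖q‖ ^ 2) * normSq (1 - q ^ 2) ≤ D) :
    (‖q‖ - q.re) / D ≤ oddPowDeficit q := by
  set ρ := ‖q‖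
  have hρ : ρ ^ 2 = q.re ^ 2 + q.im ^ 2 := by rw [Complex.sq_norm, normSq_apply]; ring
  have h1ρ : 0 < 1 - ρ ^ 2 := by nlinarith [norm_nonneg q]
  have hN : 0 < normSq (1 - q ^ 2) := by rw [normSq_one_sub_sq]; positivity
  have hre_le : q.re ≤ ρ := re_le_norm q
  refine (div_le_div_of_nonneg_left (sub_nonneg.2 hre_le) (by positivity) hD).trans ?_
  rw [oddPowDeficit, re_div_one_sub_sq, div_sub_div _ _ h1ρ.ne' hN.ne',
    div_le_div_iff_of_pos_right (by positivity), normSq_one_sub_sq]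
  -- the numerator is `(ρ - re q) * ((1 - ρ²)² + 4ρ(ρ + re q))`, whose second factor is
  -- at least `(1 + ρ²)² ≥ 1`
  nlinarith [mul_nonneg (sub_nonneg.2 hre_le)
    (by nlinarith : (0 : ℝ) ≤ (1 - ρ ^ 2) ^ 2 + 4 * ρ * (ρ + q.re) - 1)]

lemma norm_div_le_oddPowDeficit {q : ℂ} (hq : ‖q‖ ≤ 1) (hre : q.re ≤ 0) :
    ‖q‖ / (1 - ‖q‖ ^ 2) ≤ oddPowDeficit q := by
  have : (q / (1 - q ^ 2)).re ≤ 0 := by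
    rw [re_div_one_sub_sq]
    exact div_nonpos_of_nonpos_of_nonneg
      (mul_nonpos_of_nonneg_of_nonpos (by nlinarith [norm_nonneg q]) hre) (normSq_nonneg _)
  rw [oddPowDeficit]
  linarith

lemma one_sub_exp_neg_sq_le (x : ℝ) : 1 - rexp (-x) ^ 2 ≤ 2 * x := by
  rw [← Real.exp_nat_mul, Nat.cast_ofNat]
  linarith [add_one_le_exp (2 * -x)]

lemma one_sub_norm_sq_mul_normSq_exp_neg_le {z : ℂ} (hx : 0 < z.re) :
    (1 - ‖cexp (-z)‖ ^ 2) * normSq (1 - cexp (-z) ^ 2)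
      ≤ 2 * z.re * (4 * z.re ^ 2 + 4 * z.im ^ 2) := by
  have hρ : ‖cexp (-z)‖ = rexp (-z.re) := by simp [Complex.norm_exp]
  have him : (cexp (-z)).im = -(rexp (-z.re) * Real.sin z.im) := by simp [Complex.exp_im]
  have h1ρ := one_sub_exp_neg_sq_le z.re
  have hρ1 : rexp (-z.re) < 1 := exp_lt_one_iff.2 (by linarith)
  have hsin : (rexp (-z.re) * Real.sin z.im) ^ 2 ≤ z.im ^ 2 := by
    rw [mul_pow]
    exact (mul_le_of_le_one_left (sq_nonneg _) (by nlinarith [Real.exp_pos (-z.re)])).trans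
      sin_sq_le_sq
  rw [normSq_one_sub_sq, hρ, him, neg_sq]
  have h0 : 0 ≤ 1 - rexp (-z.re) ^ 2 := by nlinarith [Real.exp_pos (-z.re)]
  gcongr
  nlinarith [mul_le_mul h1ρ h1ρ h0 (by linarith)]

lemma div_le_oddPowDeficit_exp_neg {Δ : ℝ} (hΔ : 0 < Δ) {z : ℂ} (hx : 0 < z.re)
    (hΔx : Δ * z.re ≤ |z.im|) (hy : |z.im| ≤ π) :
    rexp (-(π / Δ)) * Δ ^ 2 / (4 * π ^ 2 * (1 + Δ ^ 2)) / z.re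
      ≤ oddPowDeficit (cexp (-z)) := by
  have hρ : ‖cexp (-z)‖ = rexp (-z.re) := by simp [Complex.norm_exp]
  have hre : (cexp (-z)).re = rexp (-z.re) * Real.cos z.im := by simp [Complex.exp_re]
  have hρ1 : rexp (-z.re) < 1 := exp_lt_one_iff.2 (by linarith)
  have hρΔ : rexp (-(π / Δ)) ≤ rexp (-z.re) :=
    Real.exp_le_exp.2 (neg_le_neg ((le_div_iff₀ hΔ).2 (by linarith)))
  rcases le_or_gt 0 (cexp (-z)).re with hre0 | hre0
  · have hy0 : z.im ≠ 0 := fun h => by simp [h] at hΔx; nlinarith [mul_pos hΔ hx]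
    have hx2 : z.re ^ 2 ≤ z.im ^ 2 / Δ ^ 2 := by
      rw [le_div_iff₀ (by positivity), ← mul_pow, mul_comm, ← sq_abs z.im]
      exact pow_le_pow_left₀ (by positivity) hΔx 2
    have hcos : 2 / π ^ 2 * z.im ^ 2 ≤ 1 - Real.cos z.im := by
      linarith [cos_le_one_sub_mul_cos_sq hy]
    have hden := (one_sub_norm_sq_mul_normSq_exp_neg_le hx).trans
      (by gcongr : _ ≤ 2 * z.re * (4 * (z.im ^ 2 / Δ ^ 2) + 4 * z.im ^ 2))
    refine le_trans ?_ (div_le_oddPowDeficit (by rwa [hρ]) hre0 hden)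
    rw [hρ, hre, ← mul_one_sub]
    calc _ = rexp (-(π / Δ)) * (2 / π ^ 2 * z.im ^ 2)
          / (2 * z.re * (4 * (z.im ^ 2 / Δ ^ 2) + 4 * z.im ^ 2)) := by
          field_simp
      _ ≤ _ := by gcongr
  · have h1ρ := one_sub_exp_neg_sq_le z.re
    calc _ ≤ rexp (-z.re) / (2 * z.re) := by
          rw [div_div, div_le_div_iff₀ (by positivity) (by positivity)]
          have : Δ ^ 2 * 2 ≤ 4 * π ^ 2 * (1 + Δ ^ 2) := by
            nlinarith [pi_gt_three, mul_nonneg (sq_nonneg Δ)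
              (by nlinarith [pi_gt_three] : (0 : ℝ) ≤ 4 * π ^ 2 - 2)]
          nlinarith [mul_le_mul hρΔ this (by positivity) (by positivity)]
      _ ≤ rexp (-z.re) / (1 - rexp (-z.re) ^ 2) :=
          div_le_div_of_nonneg_left (by positivity) (by nlinarith [Real.exp_pos (-z.re)]) h1ρ
      _ ≤ _ := hρ ▸ norm_div_le_oddPowDeficit (by rw [hρ]; exact hρ1.le) hre0.le

/-- Minor-arc bound: for every `Δ > 0` there are `C, ε > 0` depending only on `Δ` such
that for all `z = x + iy` with `x > 0` and `Δx ≤ |y| ≤ π`, one has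
`|ξ(e^{−z})| ≤ C · ξ(e^{−x}) · e^{−ε/x}`, where `ξ(q) = ∏_{j≥1}(1+q^{2j−1})`. -/
theorem xi_minor_arc (Δ : ℝ) (hΔ : 0 < Δ) :
    ∃ C > (0 : ℝ), ∃ ε > (0 : ℝ), ∀ z : ℂ, 0 < z.re →
      Δ * z.re ≤ |z.im| → |z.im| ≤ π →
      ‖∏' j : ℕ, (1 + Complex.exp (-z) ^ (2 * j + 1))‖ ≤
        C * (∏' j : ℕ, (1 + Real.exp (-z.re) ^ (2 * j + 1))) * Real.exp (-ε / z.re) := by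
  refine ⟨1, one_pos, rexp (-(π / Δ)) * Δ ^ 2 / (4 * π ^ 2 * (1 + Δ ^ 2)) / 4, by positivity,
    fun z hx hΔx hy => ?_⟩
  have hS := div_le_oddPowDeficit_exp_neg hΔ hx hΔx hy
  set q := cexp (-z)
  have hq : ‖q‖ = rexp (-z.re) := by simp [q, Complex.norm_exp]
  have hq1 : ‖q‖ < 1 := by rw [hq]; exact exp_lt_one_iff.2 (by linarith)
  have hdeficit := hasSum_oddPowDeficit hq1
  have hprod := norm_tprod_one_add_le (w := fun j : ℕ => q ^ (2 * j + 1))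
    (hasSum_norm_pow_two_mul_add_one hq1).summable
    fun j => norm_pow q _ ▸ pow_le_one₀ (norm_nonneg q) hq1.le
  rw [hdeficit.tsum_eq] at hprod
  simp only [norm_pow, hq] at hprod
  refine hprod.trans ?_
  rw [one_mul]
  refine mul_le_mul_of_nonneg_left (exp_le_exp.2 ?_) (tprod_nonneg fun j => by positivity)
  rw [neg_div, neg_div, div_right_comm _ (4 : ℝ) z.re, neg_le_neg_iff]
  exact div_le_div_of_nonneg_right hS four_pos.le
end

section
/- For every integer t ≥ 2: (1) there exist rational numbers a and b with β*_t = a + b·ln(2); and (2) β*_t is a rational number if and only if t is a multiple of 3. -/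
open Polynomial Real Set Filter Topology MeasureTheory Finset intervalIntegral
open scoped Nat

theorem Polynomial.hasDerivAt_exp_neg_mul_eval_sumIDeriv (p : ℝ[X]) (x : ℝ) :
    HasDerivAt (fun x ↦ -(exp (-x) * (sumIDeriv p).eval x)) (exp (-x) * p.eval x) x := by
  refine ((hasDerivAt_neg x).exp.mul ((sumIDeriv p).hasDerivAt x)).neg.congr_deriv ?_
  have h := congrArg (eval x) (sumIDeriv_eq_self_add p)
  rw [eval_add] at h
  linear_combination (exp (-x)) * h

theorem Polynomial.integral_exp_neg_mul_eval (p : ℝ[X]) (s : ℝ) :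
    ∫ x in 0..s, exp (-x) * p.eval x =
      (sumIDeriv p).eval 0 - exp (-s) * (sumIDeriv p).eval s := by
  rw [integral_eq_sub_of_hasDerivAt (fun x _ ↦ hasDerivAt_exp_neg_mul_eval_sumIDeriv p x)
    (by apply Continuous.intervalIntegrable; fun_prop)]
  simp only [neg_zero, exp_zero, one_mul]
  ring

theorem Polynomial.factorial_dvd_eval_sumIDeriv {p : ℤ[X]} {n : ℕ} {r : ℤ}
    (h : (X - C r) ^ n ∣ p) : (n ! : ℤ) ∣ (sumIDeriv p).eval r := by
  obtain ⟨g, -, hg⟩ := aeval_sumIDeriv ℤ p n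
  have := hg r (by simpa using h)
  simp only [coe_aeval_eq_eval, nsmul_eq_mul] at this
  exact ⟨_, this⟩

theorem exists_integral_exp_neg_mul_pow_mul_pow_eq (a n : ℕ) :
    ∃ k₀ k₁ : ℤ, ∫ x in 0..(a : ℝ), exp (-x) * (x ^ n * (a - x) ^ n) =
      n ! * (k₀ - exp (-a) * k₁) := by
  have h₀ : (X - C 0) ^ n ∣ (X ^ n * (C (a : ℤ) - X) ^ n : ℤ[X]) := by simp
  have ha : (X - C (a : ℤ)) ^ n ∣ (X ^ n * (C (a : ℤ) - X) ^ n : ℤ[X]) := by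
    refine Dvd.dvd.mul_left (pow_dvd_pow_of_dvd ?_ n) _
    exact ⟨-1, by ring⟩
  obtain ⟨k₀, hk₀⟩ := factorial_dvd_eval_sumIDeriv h₀
  obtain ⟨k₁, hk₁⟩ := factorial_dvd_eval_sumIDeriv ha
  refine ⟨k₀, k₁, ?_⟩
  have := integral_exp_neg_mul_eval
    ((X ^ n * (C (a : ℤ) - X) ^ n : ℤ[X]).map (Int.castRingHom ℝ)) a
  rw [sumIDeriv_map, eval_zero_map, eval_natCast_map, hk₀, hk₁] at this
  simp only [map_natCast, Polynomial.map_mul, Polynomial.map_pow, map_X, Polynomial.map_sub,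
    Polynomial.map_natCast, eval_mul, eval_pow, eval_X, eval_sub, eval_natCast, eq_intCast,
    Int.cast_mul, Int.cast_natCast] at this
  rw [this]
  ring

theorem integral_exp_neg_mul_pow_mul_pow_pos {a : ℝ} (ha : 0 < a) (n : ℕ) :
    0 < ∫ x in 0..a, exp (-x) * (x ^ n * (a - x) ^ n) := by
  refine intervalIntegral_pos_of_pos_on (by apply Continuous.intervalIntegrable; fun_prop)
    (fun x hx ↦ ?_) ha
  have := sub_pos.mpr hx.2
  have := hx.1
  positivity

theorem integral_exp_neg_mul_pow_mul_pow_le {a : ℝ} (ha : 0 ≤ a) (n : ℕ) :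
    ∫ x in 0..a, exp (-x) * (x ^ n * (a - x) ^ n) ≤ a ^ (2 * n + 1) := by
  calc ∫ x in 0..a, exp (-x) * (x ^ n * (a - x) ^ n) ≤ ∫ _ in 0..a, a ^ (2 * n) := by
        refine integral_mono_on ha (by apply Continuous.intervalIntegrable; fun_prop)
          intervalIntegrable_const fun x ⟨hx₀, hxa⟩ ↦ ?_
        have h₁ : exp (-x) ≤ 1 := exp_le_one_iff.mpr (by linarith)
        have h₂ : x ^ n * (a - x) ^ n ≤ a ^ n * a ^ n := by
          gcongr
          linarith
        calc exp (-x) * (x ^ n * (a - x) ^ n) ≤ 1 * (a ^ n * a ^ n) := by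
              gcongr
          _ = a ^ (2 * n) := by ring
    _ = a ^ (2 * n + 1) := by
      rw [intervalIntegral.integral_const, sub_zero, smul_eq_mul, pow_succ']

theorem irrational_exp_natCast {a : ℕ} (ha : a ≠ 0) : Irrational (exp a) := by
  -- If `e ^ a = q`, then `q.den * e ^ a * ∫₀ᵃ e⁻ˣ xⁿ (a - x)ⁿ dx` is a positive integer
  -- multiple of `n!`, but at most `q.den * e ^ a * a ^ (2n+1)`, which is `< n!` for large `n`.
  rintro ⟨q, hq⟩
  have hden : (q.den : ℝ) * exp a = q.num := by
    rw [← hq, Rat.cast_def]; field_simp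
  obtain ⟨n, hn⟩ : ∃ n : ℕ, q.den * exp a * (a : ℝ) ^ (2 * n + 1) < n ! := by
    have := ((FloorSemiring.tendsto_pow_div_factorial_atTop ((a : ℝ) ^ 2)).const_mul
      (q.den * exp a * a)).eventually (gt_mem_nhds (by simp : (q.den * exp a * a : ℝ) * 0 < 1))
    obtain ⟨n, hn⟩ := this.exists
    refine ⟨n, ?_⟩
    rw [mul_div_assoc', div_lt_one (by positivity)] at hn
    exact (by ring : _ = _).trans_lt hn
  obtain ⟨k₀, k₁, hk⟩ := exists_integral_exp_neg_mul_pow_mul_pow_eq a n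
  set K : ℤ := q.num * k₀ - q.den * k₁
  set J := ∫ x in 0..(a : ℝ), exp (-x) * (x ^ n * (a - x) ^ n)
  have hJ : (q.den : ℝ) * exp a * J = n ! * K := by
    rw [hk]
    push_cast [K]
    rw [← hden, exp_neg]
    field_simp
  have ha' : (0 : ℝ) < a := by positivity
  have hK_pos : 0 < K := by
    have := integral_exp_neg_mul_pow_mul_pow_pos ha' n
    have : (0 : ℝ) < n ! * K := by rw [← hJ]; positivity
    exact_mod_cast pos_of_mul_pos_right this (by positivity)
  have hK_lt : K < 1 := by
    have := integral_exp_neg_mul_pow_mul_pow_le ha'.le n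
    have : (n ! : ℝ) * K < n ! * 1 := by
      rw [← hJ, mul_one]
      refine lt_of_le_of_lt ?_ hn
      gcongr
    exact_mod_cast lt_of_mul_lt_mul_left this (by positivity)
  omega

theorem irrational_log_two : Irrational (log 2) := by
  rintro ⟨q, hq⟩
  have hq_pos : 0 < q := by exact_mod_cast hq ▸ Real.log_pos one_lt_two
  have hnum : ((q.num.natAbs : ℕ) : ℝ) = q.den * log 2 := by
    rw [Nat.cast_natAbs, Int.cast_abs, abs_of_pos (by exact_mod_cast Rat.num_pos.mpr hq_pos),
      ← hq, Rat.cast_def]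
    field_simp
  refine irrational_exp_natCast (Int.natAbs_ne_zero.mpr (Rat.num_ne_zero.mpr hq_pos.ne'))
    ⟨2 ^ q.den, ?_⟩
  rw [hnum, exp_nat_mul, exp_log two_pos]
  push_cast
  rfl

def HasLogTwoCoeff (x : ℝ) (b : ℚ) : Prop := ∃ q : ℚ, x = q + b * log 2

namespace HasLogTwoCoeff

theorem ratCast (q : ℚ) : HasLogTwoCoeff q 0 := ⟨q, by simp⟩

variable {x y : ℝ} {b b' : ℚ}

theorem add (hx : HasLogTwoCoeff x b) (hy : HasLogTwoCoeff y b') :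
    HasLogTwoCoeff (x + y) (b + b') := by
  obtain ⟨q, rfl⟩ := hx
  obtain ⟨q', rfl⟩ := hy
  exact ⟨q + q', by push_cast; ring⟩

theorem sub (hx : HasLogTwoCoeff x b) (hy : HasLogTwoCoeff y b') :
    HasLogTwoCoeff (x - y) (b - b') := by
  obtain ⟨q, rfl⟩ := hx
  obtain ⟨q', rfl⟩ := hy
  exact ⟨q - q', by push_cast; ring⟩

theorem natCast_mul (hx : HasLogTwoCoeff x b) (n : ℕ) : HasLogTwoCoeff (n * x) (n * b) := by
  obtain ⟨q, rfl⟩ := hx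
  exact ⟨n * q, by push_cast; ring⟩

theorem sum {ι : Type*} {s : Finset ι} {x : ι → ℝ} {b : ι → ℚ}
    (h : ∀ i ∈ s, HasLogTwoCoeff (x i) (b i)) :
    HasLogTwoCoeff (∑ i ∈ s, x i) (∑ i ∈ s, b i) := by
  classical
  induction s using Finset.induction_on with
  | empty => simpa using ratCast 0
  | insert i s hi ih =>
    rw [sum_insert hi, sum_insert hi]
    exact (h i (mem_insert_self i s)).add (ih fun j hj ↦ h j (mem_insert_of_mem hj))

theorem exists_ratCast_eq_iff (h : HasLogTwoCoeff x b) : (∃ r : ℚ, x = r) ↔ b = 0 := by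
  obtain ⟨q, rfl⟩ := h
  refine ⟨fun ⟨r, hr⟩ ↦ by_contra fun hb ↦ irrational_log_two ⟨(r - q) / b, ?_⟩,
    fun hb ↦ ?_⟩
  · push_cast
    rw [← hr]
    field_simp
    ring
  · exact ⟨q, by simp [hb]⟩

end HasLogTwoCoeff

theorem integrableOn_Ical_integrand {a : ℕ} (ha : a ≠ 0) (c : ℕ) :
    IntegrableOn (fun x : ℝ ↦ exp (-(a : ℝ) * x) / (1 + exp (-2 * x)) ^ c) (Ioi 0) := by
  refine (exp_neg_integrableOn_Ioi 0 (by positivity : (0 : ℝ) < a)).mono'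
    (Continuous.aestronglyMeasurable (.div (by fun_prop) (by fun_prop) fun x ↦ by positivity))
    (ae_of_all _ fun x ↦ ?_)
  rw [norm_of_nonneg (by positivity)]
  exact div_le_self (exp_pos _).le (one_le_pow₀ (le_add_of_nonneg_right (exp_pos _).le))

theorem Ical_eq_of_hasDerivAt {a c : ℕ} (ha : a ≠ 0) {F : ℝ → ℝ} {l : ℝ}
    (hF : ∀ x, HasDerivAt F (exp (-(a : ℝ) * x) / (1 + exp (-2 * x)) ^ c) x)
    (hl : Tendsto F atTop (𝓝 l)) : Ical a c = l - F 0 :=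
  integral_Ioi_of_hasDerivAt_of_tendsto' (fun x _ ↦ hF x) (integrableOn_Ical_integrand ha c) hl

theorem tendsto_exp_neg_mul_atTop {a : ℝ} (ha : 0 < a) :
    Tendsto (fun x ↦ exp (-a * x)) atTop (𝓝 0) :=
  tendsto_exp_atBot.comp (tendsto_id.const_mul_atTop_of_neg (neg_neg_iff_pos.mpr ha))

theorem tendsto_one_add_exp_neg_two_mul_atTop :
    Tendsto (fun x ↦ 1 + exp (-2 * x)) atTop (𝓝 1) := by
  simpa using (tendsto_exp_neg_mul_atTop two_pos).const_add 1

theorem hasDerivAt_one_add_exp_neg_two_mul (x : ℝ) :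
    HasDerivAt (fun x ↦ 1 + exp (-2 * x)) (-2 * exp (-2 * x)) x := by
  simpa [mul_comm] using ((hasDerivAt_id x).const_mul (-2)).exp.const_add 1

theorem Ical_zero_right {a : ℕ} (ha : a ≠ 0) : Ical a 0 = 1 / a := by
  have ha' : (a : ℝ) ≠ 0 := by exact_mod_cast ha
  rw [Ical_eq_of_hasDerivAt (F := fun x ↦ -exp (-(a : ℝ) * x) / a) (l := 0) ha]
  · rw [mul_zero, exp_zero]
    ring
  · intro x
    refine (((hasDerivAt_id x).const_mul _).exp.neg.div_const _).congr_deriv ?_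
    simp only [id_eq]
    field_simp
  · simpa using ((tendsto_exp_neg_mul_atTop (by positivity : (0 : ℝ) < a)).neg.div_const _)

theorem Ical_two_one : Ical 2 1 = log 2 / 2 := by
  rw [Ical_eq_of_hasDerivAt (F := fun x ↦ -log (1 + exp (-2 * x)) / 2) (l := 0) two_ne_zero]
  · rw [mul_zero, exp_zero, one_add_one_eq_two]
    ring
  · intro x
    have h := (hasDerivAt_one_add_exp_neg_two_mul x).log (by positivity)
    refine (h.neg.div_const 2).congr_deriv ?_
    push_cast
    field_simp
  · have := ((continuousAt_log one_ne_zero).tendsto.comp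
      tendsto_one_add_exp_neg_two_mul_atTop).neg.div_const 2
    simpa using this

theorem Ical_two_add_two (c : ℕ) :
    Ical 2 (c + 2) = (1 - 1 / 2 ^ (c + 1)) / (2 * (c + 1)) := by
  rw [Ical_eq_of_hasDerivAt (F := fun x ↦ ((1 + exp (-2 * x)) ^ (c + 1))⁻¹ / (2 * (c + 1)))
    (l := 1 / (2 * (c + 1))) two_ne_zero]
  · rw [mul_zero, exp_zero, one_add_one_eq_two]
    ring
  · intro x
    have h := (hasDerivAt_one_add_exp_neg_two_mul x).fun_pow (c + 1)
    refine ((h.inv (by positivity)).div_const _).congr_deriv ?_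
    push_cast
    field_simp
    ring
  · have := (tendsto_one_add_exp_neg_two_mul_atTop.pow (c + 1)).inv₀ (by norm_num)
    simpa using this.div_const (2 * ((c : ℝ) + 1))

theorem Ical_add_two_succ {a : ℕ} (ha : a ≠ 0) (c : ℕ) :
    Ical (a + 2) (c + 1) = Ical a c - Ical a (c + 1) := by
  rw [Ical, Ical, Ical, ← integral_sub (integrableOn_Ical_integrand ha c)
    (integrableOn_Ical_integrand ha (c + 1))]
  refine setIntegral_congr_fun measurableSet_Ioi fun x _ ↦ ?_
  have : 0 < 1 + exp (-2 * x) := by positivity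
  push_cast
  rw [show -((a : ℝ) + 2) * x = -a * x + -2 * x by ring, exp_add]
  field_simp
  ring

def IcalLogCoeff : ℕ → ℕ → ℚ
  | _, 0 => 0
  | m, c + 1 => (-1) ^ (m + c) * m.choose c / 2

theorem IcalLogCoeff_succ_succ (m c : ℕ) :
    IcalLogCoeff (m + 1) (c + 1) = IcalLogCoeff m c - IcalLogCoeff m (c + 1) := by
  cases c with
  | zero => simp [IcalLogCoeff, pow_succ, neg_div]
  | succ c =>
    simp only [IcalLogCoeff, Nat.choose_succ_succ', Nat.cast_add]
    ring

theorem IcalLogCoeff_self_succ (m : ℕ) : IcalLogCoeff m (m + 1) = 1 / 2 := by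
  simp [IcalLogCoeff, ← two_mul, pow_mul]

theorem IcalLogCoeff_eq_zero_of_lt {m c : ℕ} (h : m + 1 < c) : IcalLogCoeff m c = 0 := by
  obtain ⟨c, rfl⟩ : ∃ c', c = c' + 1 := ⟨c - 1, by omega⟩
  simp [IcalLogCoeff, Nat.choose_eq_zero_of_lt (by omega : m < c)]

theorem hasLogTwoCoeff_Ical (m c : ℕ) :
    HasLogTwoCoeff (Ical (2 * m + 2) c) (IcalLogCoeff m c) := by
  induction m generalizing c with
  | zero =>
    rcases c with _ | _ | c
    · exact ⟨1 / 2, by simp [Ical_zero_right, IcalLogCoeff]⟩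
    · exact ⟨0, by rw [Ical_two_one]; norm_num [IcalLogCoeff, div_eq_inv_mul]⟩
    · refine ⟨(1 - 1 / 2 ^ (c + 1)) / (2 * (c + 1)), ?_⟩
      simp [Ical_two_add_two, IcalLogCoeff]
  | succ m ih =>
    rcases c with _ | c
    · refine ⟨1 / (2 * m + 4), ?_⟩
      rw [Ical_zero_right (by omega)]
      push_cast [IcalLogCoeff]
      ring
    · rw [show 2 * (m + 1) + 2 = (2 * m + 2) + 2 by ring, Ical_add_two_succ (by omega),
        IcalLogCoeff_succ_succ]
      exact (ih c).sub (ih (c + 1))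

theorem lt_ub_iff {k t r : ℕ} : k < ub t r ↔ 6 * k + r ≤ t := by
  unfold ub
  omega

theorem sum_range_ub_ite {M : Type*} [AddCommMonoid M] {t r : ℕ} (hr : r < 6) (x : M) :
    ∑ k ∈ range (ub t r), (if t = 6 * k + r then x else 0) = if t % 6 = r then x else 0 := by
  rw [sum_eq_single (t / 6)]
  · exact if_congr (by omega) rfl rfl
  · intro k _ hk
    exact if_neg (by omega)
  · intro h
    rw [Finset.mem_range, lt_ub_iff] at h
    exact if_neg (by omega)

theorem hasLogTwoCoeff_sum_range_ub {t r : ℕ} (hr : r < 6) (A B m c : ℕ → ℕ)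
    (hdiag : ∀ k, t = 6 * k + r → A k = B k ∧ c k = m k + 1)
    (hoff : ∀ k, 6 * k + r < t → m k + 1 < c k) :
    HasLogTwoCoeff (∑ k ∈ range (ub t r), ((A k).choose (B k) : ℝ) * Ical (2 * m k + 2) (c k))
      (if t % 6 = r then 1 / 2 else 0) := by
  rw [← sum_range_ub_ite hr]
  refine HasLogTwoCoeff.sum fun k hk ↦ ?_
  rw [Finset.mem_range, lt_ub_iff] at hk
  convert (hasLogTwoCoeff_Ical (m k) (c k)).natCast_mul ((A k).choose (B k)) using 1
  split_ifs with h
  · obtain ⟨hAB, hc⟩ := hdiag k h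
    simp [hAB, hc, IcalLogCoeff_self_succ]
  · simp [IcalLogCoeff_eq_zero_of_lt (hoff k (by omega))]

theorem hasLogTwoCoeff_betaStar (t : ℕ) :
    HasLogTwoCoeff (betaStar t) (if 3 ∣ t then 0 else 1 / 2) := by
  have h₄ : ∀ k, 4 * k + 4 = 2 * (2 * k + 1) + 2 := fun k ↦ by ring
  have h₂ : ∀ k, 4 * k + 2 = 2 * (2 * k) + 2 := fun k ↦ by ring
  rw [betaStar]
  simp only [h₄, h₂]
  by_cases ht : Even t
  · obtain ⟨j, rfl⟩ := ht
    rw [if_pos ⟨j, rfl⟩, show (if 3 ∣ j + j then 0 else 1 / 2 : ℚ) =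
      (if (j + j) % 6 = 4 then 1 / 2 else 0) + (if (j + j) % 6 = 2 then 1 / 2 else 0) by
        split_ifs <;> first | omega | norm_num]
    exact (hasLogTwoCoeff_sum_range_ub (by norm_num) _ _ _ _ (fun k _ ↦ ⟨by omega, by omega⟩)
      (fun k _ ↦ by omega)).add
      (hasLogTwoCoeff_sum_range_ub (by norm_num) _ _ _ _ (fun k _ ↦ ⟨by omega, by omega⟩)
      (fun k _ ↦ by omega))
  · obtain ⟨j, rfl⟩ := Nat.not_even_iff_odd.mp ht
    rw [if_neg ht, show (if 3 ∣ 2 * j + 1 then 0 else 1 / 2 : ℚ) =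
      (if (2 * j + 1) % 6 = 1 then 1 / 2 else 0) + (if (2 * j + 1) % 6 = 5 then 1 / 2 else 0) by
        split_ifs <;> first | omega | norm_num]
    exact (hasLogTwoCoeff_sum_range_ub (by norm_num) _ _ _ _ (fun k _ ↦ ⟨by omega, by omega⟩)
      (fun k _ ↦ by omega)).add
      (hasLogTwoCoeff_sum_range_ub (by norm_num) _ _ _ _ (fun k _ ↦ ⟨by omega, by omega⟩)
      (fun k _ ↦ by omega))

theorem betaStar_rationality_general (t : ℕ) :
    (∃ a b : ℚ, betaStar t = (a : ℝ) + (b : ℝ) * Real.log 2) ∧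
    ((∃ r : ℚ, betaStar t = (r : ℝ)) ↔ 3 ∣ t) := by
  have h := hasLogTwoCoeff_betaStar t
  constructor
  · obtain ⟨q, hq⟩ := h
    exact ⟨q, _, hq⟩
  · rw [h.exists_ratCast_eq_iff]
    split_ifs with ht <;> simp [ht]

/-- For every `t ≥ 2`: `β*_t ∈ ℚ(log 2)`, i.e. `β*_t = a + b·ln 2` with `a, b ∈ ℚ`;
and `β*_t ∈ ℚ` if and only if `3 ∣ t`. -/
theorem betaStar_rationality (t : ℕ) (ht : 2 ≤ t) :
    (∃ a b : ℚ, betaStar t = (a : ℝ) + (b : ℝ) * Real.log 2) ∧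
    ((∃ r : ℚ, betaStar t = (r : ℝ)) ↔ 3 ∣ t) :=
  betaStar_rationality_general t
end

section
/- For every integer n ≥ 1, Σ_{i=0}^{⌊(n−1)/3⌋} (1/(n−3i)) · C(n−i−1, 2i) · 2^i = (1/n) · ( 2^{n−1} + [2 ∣ n]·(−1)^{n/2} + [3 ∣ n]·(−3·2^{n/3 − 1}) ), where [P] equals 1 if P holds and 0 otherwise. -/
open Finset

lemma BIE.nat_key (m j : ℕ) :
    2 * (m + j + 2) * Nat.choose m (2*j+2)
      = (2 * Nat.choose (m+1) (2*j+2) + Nat.choose m (2*j+1)) * (m - (2*j+1)) := by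
  rcases le_or_gt (2*j+1) m with h | h
  · obtain ⟨d, rfl⟩ : ∃ d, m = 2*j+1 + d := ⟨m - (2*j+1), by omega⟩
    have P2 := Nat.choose_succ_right_eq (2*j+1+d) (2*j+1)
    have hp : Nat.choose (2*j+1+d+1) (2*j+2)
        = Nat.choose (2*j+1+d) (2*j+1) + Nat.choose (2*j+1+d) (2*j+2) :=
      Nat.choose_succ_succ _ _
    have hd : 2*j+1+d - (2*j+1) = d := by omega
    rw [hd] at P2 ⊢
    rw [hp]
    nlinarith [P2]
  · have h1 : Nat.choose m (2*j+2) = 0 := Nat.choose_eq_zero_of_lt (by omega)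
    have h2 : m - (2*j+1) = 0 := by omega
    simp [h1, h2]

noncomputable def BIE.U (n : ℕ) : ℝ := ∑ i ∈ range (n+1), (Nat.choose (n-i) (2*i) : ℝ) * 2^i
noncomputable def BIE.V (n : ℕ) : ℝ := ∑ j ∈ range n, (Nat.choose (n-2-j) (2*j+1) : ℝ) * 2^j
noncomputable def BIE.g (n : ℕ) : ℝ := if 2 ∣ n then (-1 : ℝ)^(n/2) else 0
noncomputable def BIE.f (n : ℕ) : ℝ := 2^(n-1) + BIE.g n

namespace BIE

lemma R1 (n : ℕ) : U (n+1) = U n + 2 * V (n+1) := by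
  have hA : U (n+1) = (∑ i ∈ range (n+1), (Nat.choose (n-i) (2*i+2) : ℝ) * 2^(i+1)) + 1 := by
    rw [U, Finset.sum_range_succ']
    congr 1
    · refine Finset.sum_congr rfl ?_
      intro i _
      have h1 : n + 1 - (i+1) = n - i := by omega
      have h2 : 2 * (i+1) = 2*i+2 := by ring
      rw [h1, h2]
    · simp
  have hB : U n = (∑ i ∈ range (n+1), (Nat.choose (n-i-1) (2*i+2) : ℝ) * 2^(i+1)) + 1 := by
    have e1 : (∑ i ∈ range (n+1), (Nat.choose (n-i-1) (2*i+2) : ℝ) * 2^(i+1))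
        = ∑ i ∈ range n, (Nat.choose (n-(i+1)) (2*(i+1)) : ℝ) * 2^(i+1) := by
      rw [Finset.sum_range_succ]
      have hz : n - n - 1 = 0 := by omega
      rw [hz, Nat.choose_eq_zero_of_lt (by omega : (0:ℕ) < 2*n+2)]
      rw [Finset.sum_congr rfl (fun i _ => by
        rw [show n - i - 1 = n - (i+1) from by omega, show 2*i+2 = 2*(i+1) from by ring])]
      simp
    rw [e1, U, Finset.sum_range_succ']
    simp
  have hC : V (n+1) = ∑ j ∈ range (n+1), (Nat.choose (n-1-j) (2*j+1) : ℝ) * 2^j := by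
    rw [V]
    refine Finset.sum_congr rfl ?_
    intro j _
    have h1 : n + 1 - 2 - j = n - 1 - j := by omega
    rw [h1]
  rw [hA, hB, hC]
  have key : ∀ i ∈ range (n+1),
      (Nat.choose (n-i) (2*i+2) : ℝ) * 2^(i+1)
        = (Nat.choose (n-i-1) (2*i+2) : ℝ) * 2^(i+1)
          + 2 * ((Nat.choose (n-1-i) (2*i+1) : ℝ) * 2^i) := by
    intro i hi
    simp only [mem_range] at hi
    rcases le_or_gt (i+1) n with h | h
    · have h1 : n - i = (n-i-1) + 1 := by omega
      have h2 : n - 1 - i = n - i - 1 := by omega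
      rw [h1, h2, show 2*i+2 = (2*i+1)+1 from rfl, Nat.choose_succ_succ]
      push_cast
      ring
    · have e1 : (Nat.choose (n-i) (2*i+2) : ℝ) = 0 := by
        rw [show n - i = 0 from by omega]
        simp [Nat.choose_eq_zero_of_lt]
      have e2 : (Nat.choose (n-i-1) (2*i+2) : ℝ) = 0 := by
        rw [show n - i - 1 = 0 from by omega]
        simp [Nat.choose_eq_zero_of_lt]
      have e3 : (Nat.choose (n-1-i) (2*i+1) : ℝ) = 0 := by
        rw [show n - 1 - i = 0 from by omega]
        simp [Nat.choose_eq_zero_of_lt]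
      rw [e1, e2, e3]
      ring
  rw [Finset.sum_congr rfl key, Finset.sum_add_distrib, Finset.mul_sum]
  ring

lemma R2 (n : ℕ) : V (n+3) = V (n+2) + U n := by
  rw [V, V, U]
  have extV : ∑ j ∈ range (n+3), (Nat.choose (n+2-2-j) (2*j+1) : ℝ) * 2^j
      = ∑ j ∈ range (n+2), (Nat.choose (n+2-2-j) (2*j+1) : ℝ) * 2^j := by
    rw [Finset.sum_range_succ]
    have : n + 2 - 2 - (n+2) = 0 := by omega
    rw [this]; simp [Nat.choose_eq_zero_of_lt]
  have extU : ∑ i ∈ range (n+3), (Nat.choose (n-i) (2*i) : ℝ) * 2^i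
      = ∑ i ∈ range (n+1), (Nat.choose (n-i) (2*i) : ℝ) * 2^i := by
    rw [Finset.sum_range_succ, Finset.sum_range_succ]
    have h1 : n - (n+1) = 0 := by omega
    have h2 : n - (n+2) = 0 := by omega
    rw [h1, h2]; simp [Nat.choose_eq_zero_of_lt]
  rw [← extV, ← extU, ← Finset.sum_add_distrib]
  refine Finset.sum_congr rfl ?_
  intro j hj
  simp only [mem_range] at hj
  rcases le_or_gt j n with h | h
  · have h1 : n + 3 - 2 - j = (n - j) + 1 := by omega
    have h2 : n + 2 - 2 - j = n - j := by omega
    rw [h1, h2, Nat.choose_succ_succ]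
    push_cast; ring
  · have h1 : n + 3 - 2 - j = 0 := by omega
    have h2 : n + 2 - 2 - j = 0 := by omega
    have h3 : n - j = 0 := by omega
    rw [h1, h2, h3]
    have hj1 : 0 < 2*j+1 := by omega
    have hj2 : 0 < 2*j := by omega
    simp [Nat.choose_eq_zero_of_lt hj1, Nat.choose_eq_zero_of_lt hj2]

lemma L3 (n : ℕ) : U (n+3) = 2 * U (n+2) - U (n+1) + 2 * U n := by
  have a := R1 (n+2); have b := R1 (n+1); have c := R2 n
  rw [show n+1+1 = n+2 from by omega] at b
  linarith

lemma L4 (n : ℕ) : V (n+4) = 2 * V (n+3) - V (n+2) + 2 * V (n+1) := by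
  have a := R2 (n+1); have b := R2 n; have c := R1 n
  rw [show n+1+3 = n+4 from by omega, show n+1+2 = n+3 from by omega] at a
  linarith

lemma gstep (n : ℕ) : g (n+2) = - g n := by
  rw [g, g]
  rcases Nat.even_or_odd n with h | h
  · rw [Nat.even_iff] at h
    have h2 : 2 ∣ n := by omega
    have h4 : 2 ∣ n + 2 := by omega
    have h5 : (n+2)/2 = n/2 + 1 := by omega
    rw [if_pos h2, if_pos h4, h5, pow_succ]
    ring
  · rw [Nat.odd_iff] at h
    have h2 : ¬ (2 ∣ n) := by omega
    have h4 : ¬ (2 ∣ (n + 2)) := by omega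
    rw [if_neg h2, if_neg h4]; ring

lemma L7 (n : ℕ) : f (n+4) = 2 * f (n+3) - f (n+2) + 2 * f (n+1) := by
  have a := gstep (n+2)
  have b := gstep (n+1)
  have c := gstep n
  rw [show n+2+2 = n+4 from by omega] at a
  rw [show n+1+2 = n+3 from by omega] at b
  simp only [f, show n+4-1 = n+3 from by omega, show n+3-1 = n+2 from by omega,
    show n+2-1 = n+1 from by omega, show n+1-1 = n from by omega]
  have p : (2:ℝ)^(n+3) = 2 * 2^(n+2) - 2^(n+1) + 2 * 2^n := by ring
  linarith

lemma main_int : ∀ n : ℕ, U (n+1) + V (n+1) = f (n+1) := by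
  have hU1 : U 1 = 1 := by norm_num [U, Finset.sum_range_succ]
  have hU2 : U 2 = 1 := by
    norm_num [U, Finset.sum_range_succ, show Nat.choose 1 2 = 0 from rfl]
  have hU3 : U 3 = 3 := by
    norm_num [U, Finset.sum_range_succ, show Nat.choose 2 2 = 1 from rfl,
      show Nat.choose 1 4 = 0 from rfl, show Nat.choose 0 6 = 0 from rfl]
  have hV1 : V 1 = 0 := by norm_num [V, Finset.sum_range_succ]
  have hV2 : V 2 = 0 := by
    norm_num [V, Finset.sum_range_succ, show Nat.choose 0 3 = 0 from rfl]
  have hV3 : V 3 = 1 := by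
    norm_num [V, Finset.sum_range_succ, show Nat.choose 1 1 = 1 from rfl,
      show Nat.choose 0 3 = 0 from rfl, show Nat.choose 0 5 = 0 from rfl]
  have hf1 : f 1 = 1 := by norm_num [f, g]
  have hf2 : f 2 = 1 := by norm_num [f, g]
  have hf3 : f 3 = 4 := by norm_num [f, g]
  have key : ∀ n : ℕ, (U (n+1) + V (n+1) = f (n+1)) ∧ (U (n+2) + V (n+2) = f (n+2))
      ∧ (U (n+3) + V (n+3) = f (n+3)) := by
    intro n
    induction n with
    | zero =>
      refine ⟨?_, ?_, ?_⟩
      · rw [hU1, hV1, hf1]; norm_num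
      · rw [hU2, hV2, hf2]; norm_num
      · rw [hU3, hV3, hf3]; norm_num
    | succ m ih =>
      obtain ⟨h1, h2, h3⟩ := ih
      refine ⟨?_, ?_, ?_⟩
      · rw [show m+1+1 = m+2 from by omega]; exact h2
      · rw [show m+1+2 = m+3 from by omega]; exact h3
      · rw [show m+1+3 = m+4 from by omega]
        have a := L3 (m+1)
        have b := L4 m
        have c := L7 m
        rw [show m+1+3 = m+4 from by omega, show m+1+2 = m+3 from by omega,
          show m+1+1 = m+2 from by omega] at a
        linarith
  exact fun n => (key n).1

end BIE


/-- Lemma 5.4, equation (5.3): for `n ≥ 1`,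
`Σ_{i=0}^{⌊(n−1)/3⌋} C(n−i−1, 2i)·2^i/(n−3i)
  = (1/n)(2^{n−1} + [2∣n](−1)^{n/2} + [3∣n](−3·2^{n/3−1}))`. -/
theorem binom_identity_even (n : ℕ) (hn : 1 ≤ n) :
    ∑ i ∈ Finset.range ((n - 1) / 3 + 1),
        (1 / ((n : ℝ) - 3 * i)) * (Nat.choose (n - i - 1) (2 * i) : ℝ) * 2 ^ i =
      (1 / (n : ℝ)) *
        (2 ^ (n - 1) + (if 2 ∣ n then ((-1 : ℝ)) ^ (n / 2) else 0)
          + (if 3 ∣ n then (-3 : ℝ) * 2 ^ (n / 3 - 1) else 0)) := by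
  classical
  have hn0 : (n:ℝ) ≠ 0 := Nat.cast_ne_zero.mpr (by omega)
  set X : ℕ → ℝ := fun i => (Nat.choose (n-i) (2*i) : ℝ) * 2^i
    + (if i = 0 then 0 else (Nat.choose (n-i-1) (2*i-1) : ℝ) * 2^(i-1)) with hX
  have point : ∀ i ∈ Finset.range ((n-1)/3+1),
      (1 / ((n : ℝ) - 3 * i)) * (Nat.choose (n - i - 1) (2 * i) : ℝ) * 2 ^ i
        = (1/(n:ℝ)) * X i := by
    intro i hi
    simp only [Finset.mem_range] at hi
    have h3i : 3*i + 1 ≤ n := by omega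
    match i with
    | 0 => simp [hX]
    | (j+1) =>
      obtain ⟨m, hm⟩ : ∃ m, n = m + j + 2 := ⟨n - j - 2, by omega⟩
      subst hm
      have hm2 : 2*j + 2 ≤ m := by omega
      have key := BIE.nat_key m j
      have keyR : 2*((m:ℝ)+j+2) * (Nat.choose m (2*j+2) : ℝ)
          = (2*(Nat.choose (m+1) (2*j+2) : ℝ) + (Nat.choose m (2*j+1) : ℝ))
              * ((m:ℝ) - (2*j+1)) := by
        have hc : ((2 * (m + j + 2) * Nat.choose m (2*j+2) : ℕ) : ℝ)
            = (((2 * Nat.choose (m+1) (2*j+2) + Nat.choose m (2*j+1)) * (m - (2*j+1)) : ℕ) : ℝ) := by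
          exact_mod_cast congrArg (Nat.cast (R := ℝ)) key
        push_cast [Nat.cast_sub (show 2*j+1 ≤ m from by omega)] at hc
        linarith [hc]
      simp only [hX]
      rw [show m + j + 2 - (j+1) - 1 = m from by omega,
        show m + j + 2 - (j+1) = m + 1 from by omega,
        show 2*(j+1) - 1 = 2*j+1 from by omega,
        show (j+1) - 1 = j from by omega,
        show 2*(j+1) = 2*j+2 from by ring,
        if_neg (by omega : ¬ (j+1 = 0))]
      have d1 : ((m:ℝ)+j+2) ≠ 0 := by positivity
      have d2 : ((m+j+2 : ℕ):ℝ) - 3*((j+1 : ℕ):ℝ) = (m:ℝ) - (2*j+1) := by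
        push_cast; ring
      have d3 : (m:ℝ) - (2*j+1) ≠ 0 := by
        have : (2*j+2 : ℝ) ≤ (m:ℝ) := by exact_mod_cast hm2
        intro hcon; nlinarith
      rw [show (((m+j+2 : ℕ)):ℝ) - 3*(((j+1:ℕ)):ℝ) = (m:ℝ) - (2*j+1) from by push_cast; ring]
      push_cast
      field_simp
      linear_combination (2:ℝ)^j * keyR
  rw [Finset.sum_congr rfl point, ← Finset.mul_sum]
  have hNle : (n-1)/3 + 1 ≤ n + 1 := by omega
  have split := Finset.sum_range_add_sum_Ico X hNle
  have full : ∑ i ∈ Finset.range (n+1), X i = BIE.U n + BIE.V n := by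
    simp only [hX]
    rw [Finset.sum_add_distrib, BIE.U, BIE.V]
    congr 1
    rw [Finset.sum_range_succ']
    have hz : (if (0:ℕ) = 0 then (0:ℝ) else (Nat.choose (n-0-1) (2*0-1) : ℝ) * 2^(0-1)) = 0 := by
      rw [if_pos rfl]
    rw [hz, add_zero]
    refine Finset.sum_congr rfl ?_
    intro j _
    rw [if_neg (by omega : ¬ (j+1 = 0)),
      show n - (j+1) - 1 = n - 2 - j from by omega,
      show 2*(j+1) - 1 = 2*j+1 from by omega,
      show (j+1) - 1 = j from by omega]
  have tail : ∑ i ∈ Finset.Ico ((n-1)/3+1) (n+1), X i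
      = (if 3 ∣ n then (3:ℝ) * 2^(n/3-1) else 0) := by
    by_cases h3 : 3 ∣ n
    · rw [if_pos h3]
      have hmem : n/3 ∈ Finset.Ico ((n-1)/3+1) (n+1) := by
        rw [Finset.mem_Ico]; omega
      rw [Finset.sum_eq_single_of_mem (n/3) hmem ?_]
      · obtain ⟨k, hk⟩ := h3
        have hk3 : n / 3 = k := by omega
        simp only [hX, hk3]
        rw [show n - k - 1 = 2*(k-1)+1 from by omega,
          show 2*k - 1 = 2*(k-1)+1 from by omega,
          show n - k = 2*k from by omega,
          Nat.choose_self, Nat.choose_self,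
          if_neg (by omega : ¬ (k = 0))]
        obtain ⟨k', rfl⟩ : ∃ k', k = k'+1 := ⟨k-1, by omega⟩
        norm_num
        ring
      · intro b hb hbne
        rw [Finset.mem_Ico] at hb
        have hb3 : n + 1 ≤ 3 * b := by omega
        simp only [hX]
        rw [Nat.choose_eq_zero_of_lt (by omega : n - b < 2*b),
          if_neg (by omega : ¬ (b = 0)),
          Nat.choose_eq_zero_of_lt (by omega : n - b - 1 < 2*b - 1)]
        norm_num
    · rw [if_neg h3]
      refine Finset.sum_eq_zero ?_
      intro b hb
      rw [Finset.mem_Ico] at hb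
      have hb3 : n + 1 ≤ 3 * b := by omega
      simp only [hX]
      rw [Nat.choose_eq_zero_of_lt (by omega : n - b < 2*b),
        if_neg (by omega : ¬ (b = 0)),
        Nat.choose_eq_zero_of_lt (by omega : n - b - 1 < 2*b - 1)]
      norm_num
  have W := BIE.main_int (n-1)
  rw [show n - 1 + 1 = n from by omega] at W
  have hsum : ∑ i ∈ Finset.range ((n-1)/3+1), X i
      = BIE.f n - (if 3 ∣ n then (3:ℝ) * 2^(n/3-1) else 0) := by
    rw [← W, ← full, ← split, tail]; ring
  rw [hsum]
  simp only [BIE.f, BIE.g]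
  by_cases h3 : 3 ∣ n
  · rw [if_pos h3, if_pos h3]; ring
  · rw [if_neg h3, if_neg h3]; ring
end

section
/- For every integer n ≥ 1, Σ_{i=0}^{⌊(n−1)/3⌋} (1/(n−3i)) · C(n−i, 2i+1) · 2^i = (1/(n + 3/2)) · ( 2^n + [2 ∣ n]·(1/2)·(−1)^{n/2} + [2 ∣ (n−1)]·(1/2)·(−1)^{(n−1)/2} + [3 ∣ n]·(−3·2^{n/3 − 1}) ), where [P] equals 1 if P holds and 0 otherwise. -/
/-!
Write `A n = ∑ᵢ C(n - i, 2i + 1) 2^i`. For `3i < n` the weight `1 / (n - 3i)` can be cleared: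
`(2n + 3) C(n-i, 2i+1) = (n - 3i) (5 C(n-i, 2i+1) - 3 C(n-1-i, 2i+1) + 3 C(n-1-i, 2i-1))`,
so `(2n + 3)` times the sum is `5 A n - 3 A (n-1) + 6 A (n-2)`, up to the single term
`i = n/3` of `A (n-2)` that the range of summation misses when `3 ∣ n`.

By Pascal's rule `A (n+3) + A (n+1) = 2 A (n+2) + 2 A n`, a recurrence with characteristic
polynomial `(x - 2)(x² + 1)`. The combination `5 A n - 3 A (n-1) + 6 A (n-2)` satisfies it too,
as does `2^(n+1) + (-1)^⌊n/2⌋`, and the two agree at `n = 2, 3, 4`.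
-/

namespace BinomIdentity

open Finset Finset.Nat

def oddChooseSum (n : ℕ) : ℕ := ∑ p ∈ antidiagonal n, p.2.choose (2 * p.1 + 1) * 2 ^ p.1

def evenChooseSum (n : ℕ) : ℕ := ∑ p ∈ antidiagonal n, p.2.choose (2 * p.1) * 2 ^ p.1

theorem oddChooseSum_succ (n : ℕ) :
    oddChooseSum (n + 1) = evenChooseSum n + oddChooseSum n := by
  rw [oddChooseSum, sum_antidiagonal_succ']
  simp only [Nat.choose_succ_succ', add_mul, sum_add_distrib]
  simp [evenChooseSum, oddChooseSum]

theorem evenChooseSum_add_two (n : ℕ) :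
    evenChooseSum (n + 2) = evenChooseSum (n + 1) + 2 * oddChooseSum n := by
  rw [evenChooseSum, sum_antidiagonal_succ, sum_antidiagonal_succ', evenChooseSum,
    sum_antidiagonal_succ, oddChooseSum, mul_sum]
  simp only [mul_add, Nat.choose_succ_succ', add_mul, sum_add_distrib, pow_succ, mul_zero,
    Nat.choose_zero_right, pow_zero, mul_one, Nat.choose_zero_succ, zero_mul, zero_add]
  ring_nf

theorem oddChooseSum_add_three (n : ℕ) :
    oddChooseSum (n + 3) + oddChooseSum (n + 1)
      = 2 * oddChooseSum (n + 2) + 2 * oddChooseSum n := by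
  have := evenChooseSum_add_two n
  have := oddChooseSum_succ n
  have : oddChooseSum (n + 2) = _ := oddChooseSum_succ (n + 1)
  have : oddChooseSum (n + 3) = _ := oddChooseSum_succ (n + 2)
  omega

theorem oddChooseSum_combination_eq : ∀ n : ℕ,
    5 * (oddChooseSum (n + 2) : ℤ) - 3 * oddChooseSum (n + 1) + 6 * oddChooseSum n
      = 2 ^ (n + 3) + (-1) ^ ((n + 2) / 2)
  | 0 => by decide
  | 1 => by decide
  | 2 => by decide
  | n + 3 => by
    have h0 := oddChooseSum_combination_eq n
    have h1 := oddChooseSum_combination_eq (n + 1)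
    have h2 := oddChooseSum_combination_eq (n + 2)
    have r (k : ℕ) : (oddChooseSum (k + 3) + oddChooseSum (k + 1) : ℤ)
        = 2 * oddChooseSum (k + 2) + 2 * oddChooseSum k := mod_cast oddChooseSum_add_three k
    rw [show (n + 3 + 2) / 2 = (n + 3) / 2 + 1 by omega, pow_succ]
    rw [show (n + 2 + 2) / 2 = (n + 2) / 2 + 1 by omega, pow_succ] at h2
    linear_combination 5 * r (n + 2) - 3 * r (n + 1) + 6 * r n + 2 * h2 - h1 + 2 * h0

theorem sum_range_eq_oddChooseSum {n R : ℕ} (hR : n ≤ 3 * R) :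
    ∑ i ∈ range R, (n - i).choose (2 * i + 1) * 2 ^ i = oddChooseSum n := by
  have hvanish : ∀ i ≥ (n + 2) / 3, (n - i).choose (2 * i + 1) * 2 ^ i = 0 := fun i hi => by
    rw [Nat.choose_eq_zero_of_lt (by omega), zero_mul]
  rw [oddChooseSum, sum_antidiagonal_eq_sum_range_succ (fun i j => j.choose (2 * i + 1) * 2 ^ i),
    eventually_constant_sum hvanish (by omega)]
  exact (eventually_constant_sum hvanish (by omega)).symm

theorem oddChooseSum_eq_sum_range_add (m : ℕ) :
    oddChooseSum m = ∑ j ∈ range ((m + 1) / 3), (m - j).choose (2 * j + 1) * 2 ^ j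
      + if 3 ∣ m + 2 then 2 ^ ((m + 1) / 3) else 0 := by
  split_ifs with h
  · obtain ⟨q, rfl⟩ : ∃ q, m = 3 * q + 1 := ⟨m / 3, by omega⟩
    rw [← sum_range_eq_oddChooseSum (R := q + 1) (by omega), sum_range_succ,
      show (3 * q + 1 + 1) / 3 = q by omega, show 3 * q + 1 - q = 2 * q + 1 by omega,
      Nat.choose_self, one_mul]
  · rw [add_zero, sum_range_eq_oddChooseSum (by omega)]

theorem add_two_sub_mul_choose_eq {R : Type*} [CommRing R] (a d : ℕ) :
    ((a : R) + 2 - d) * (a + d + 1).choose (a + 2)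
      = d * ((a + d).choose a - (a + d).choose (a + 2)) := by
  have pascal :
      ((a + d + 1).choose (a + 2) : R) = (a + d).choose (a + 1) + (a + d).choose (a + 2) :=
    mod_cast congrArg (Nat.cast : ℕ → R) (Nat.choose_succ_succ' (a + d) (a + 1))
  have h1 : ((a + d).choose (a + 1) : R) * (a + 1) = (a + d).choose a * d := by
    have := Nat.choose_succ_right_eq (a + d) a
    rw [Nat.add_sub_cancel_left] at this
    exact_mod_cast congrArg (Nat.cast : ℕ → R) this
  have h2 :
      ((a + d + 1 : ℕ) : R) * (a + d).choose (a + 1) = (a + d + 1).choose (a + 2) * (a + 2) :=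
    mod_cast congrArg (Nat.cast : ℕ → R) (Nat.add_one_mul_choose_eq (a + d) (a + 1))
  push_cast at h2
  linear_combination h1 - h2 - (d : R) * pascal

/-- The summand `i = j + 1` of the sum for `n = m + 2`, with its weight `1 / (n - 3i)` cleared;
`h` says `3i < n`. -/
theorem mul_choose_div_eq (m j : ℕ) (h : 3 * j + 2 ≤ m) :
    (2 * ((m : ℝ) + 2) + 3) * (1 / ((m : ℝ) + 2 - 3 * ((j : ℝ) + 1))
        * ((m + 1 - j).choose (2 * (j + 1) + 1) : ℝ) * 2 ^ (j + 1))
      = 5 * (((m + 1 - j).choose (2 * (j + 1) + 1) : ℝ) * 2 ^ (j + 1))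
        - 3 * (((m - j).choose (2 * (j + 1) + 1) : ℝ) * 2 ^ (j + 1))
        + 6 * (((m - j).choose (2 * j + 1) : ℝ) * 2 ^ j) := by
  obtain ⟨e, rfl⟩ : ∃ e, m = 3 * j + 2 + e := ⟨m - 3 * j - 2, by omega⟩
  have key := add_two_sub_mul_choose_eq (R := ℝ) (2 * j + 1) (e + 1)
  rw [show 2 * j + 1 + (e + 1) + 1 = 3 * j + 2 + e + 1 - j by omega,
    show 2 * j + 1 + 2 = 2 * (j + 1) + 1 by omega,
    show 2 * j + 1 + (e + 1) = 3 * j + 2 + e - j by omega] at key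
  have hden : ((3 * j + 2 + e : ℕ) : ℝ) + 2 - 3 * ((j : ℝ) + 1) = e + 1 := by push_cast; ring
  rw [hden]
  push_cast at key ⊢
  field_simp
  linear_combination (6 * 2 ^ j : ℝ) * key

theorem mul_sum_choose_div_eq (m : ℕ) :
    (2 * ((m + 2 : ℕ) : ℝ) + 3) * ∑ i ∈ range ((m + 1) / 3 + 1),
        (1 / (((m + 2 : ℕ) : ℝ) - 3 * i)) * ((m + 2 - i).choose (2 * i + 1) : ℝ) * 2 ^ i =
      5 * oddChooseSum (m + 2) - 3 * oddChooseSum (m + 1) + 6 * oddChooseSum m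
        - 6 * (if 3 ∣ m + 2 then (2 : ℝ) ^ ((m + 1) / 3) else 0) := by
  have hA2 := sum_range_eq_oddChooseSum (n := m + 2) (R := (m + 1) / 3 + 1) (by omega)
  have hA1 := sum_range_eq_oddChooseSum (n := m + 1) (R := (m + 1) / 3 + 1) (by omega)
  rw [← hA2, ← hA1, oddChooseSum_eq_sum_range_add m, mul_sum, sum_range_succ', sum_range_succ',
    sum_range_succ']
  push_cast
  have hsummand_zero :
      (2 * ((m : ℝ) + 2) + 3) * (1 / ((m : ℝ) + 2 - 3 * 0) * ((m + 2).choose 1 : ℕ) * 2 ^ 0)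
      = 5 * (((m + 2).choose 1 : ℕ) * 1) - 3 * (((m + 1).choose 1 : ℕ) * 1) := by
    have : (m : ℝ) + 2 ≠ 0 := by positivity
    simp only [Nat.choose_one_right, mul_zero, sub_zero, pow_zero, mul_one]
    push_cast
    field_simp
    ring
  rw [sum_congr rfl fun j hj => mul_choose_div_eq m j (by simp at hj; omega), sum_add_distrib,
    sum_sub_distrib, ← mul_sum, ← mul_sum, ← mul_sum, hsummand_zero]
  ring

theorem ite_two_dvd_add_ite_two_dvd_sub_one {M : Type*} [AddMonoid M] (f : ℕ → M) {n : ℕ}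
    (hn : n ≠ 0) :
    ((if 2 ∣ n then f (n / 2) else 0) + if 2 ∣ n - 1 then f ((n - 1) / 2) else 0)
      = f (n / 2) := by
  rcases Nat.even_or_odd' n with ⟨k, rfl | rfl⟩
  · rw [if_pos (by omega), if_neg (by omega), add_zero]
  · rw [if_neg (by omega), if_pos (by omega), zero_add,
      show (2 * k + 1 - 1) / 2 = (2 * k + 1) / 2 by omega]

end BinomIdentity

/-- Lemma 5.4, equation (5.4): for `n ≥ 1`,
`Σ_{i=0}^{⌊(n−1)/3⌋} C(n−i, 2i+1)·2^i/(n−3i)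
  = (1/(n+3/2))(2^n + [2∣n](1/2)(−1)^{n/2} + [2∣(n−1)](1/2)(−1)^{(n−1)/2} + [3∣n](−3·2^{n/3−1}))`. -/
theorem binom_identity_odd (n : ℕ) (hn : 1 ≤ n) :
    ∑ i ∈ Finset.range ((n - 1) / 3 + 1),
        (1 / ((n : ℝ) - 3 * i)) * (Nat.choose (n - i) (2 * i + 1) : ℝ) * 2 ^ i =
      (1 / ((n : ℝ) + 3 / 2)) *
        (2 ^ n + (if 2 ∣ n then (1 / 2 : ℝ) * (-1) ^ (n / 2) else 0)
          + (if 2 ∣ (n - 1) then (1 / 2 : ℝ) * (-1) ^ ((n - 1) / 2) else 0)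
          + (if 3 ∣ n then (-3 : ℝ) * 2 ^ (n / 3 - 1) else 0)) := by
  obtain rfl | hn2 := hn.eq_or_lt
  · norm_num
  obtain ⟨m, rfl⟩ : ∃ m, n = m + 2 := ⟨n - 2, by omega⟩
  have hsum := BinomIdentity.mul_sum_choose_div_eq m
  have hclosed : (5 * BinomIdentity.oddChooseSum (m + 2) - 3 * BinomIdentity.oddChooseSum (m + 1)
      + 6 * BinomIdentity.oddChooseSum m : ℝ) = 2 ^ (m + 3) + (-1) ^ ((m + 2) / 2) :=
    mod_cast BinomIdentity.oddChooseSum_combination_eq m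
  have hthree : (if 3 ∣ m + 2 then (-3 : ℝ) * 2 ^ ((m + 2) / 3 - 1) else 0)
      = -3 * if 3 ∣ m + 2 then (2 : ℝ) ^ ((m + 1) / 3) else 0 := by
    split_ifs
    · rw [show (m + 2) / 3 - 1 = (m + 1) / 3 by omega]
    · rw [mul_zero]
  rw [add_assoc (2 ^ _), show (m + 2 - 1) / 3 = (m + 1) / 3 by omega, hthree,
    BinomIdentity.ite_two_dvd_add_ite_two_dvd_sub_one (fun k => (1 / 2 : ℝ) * (-1) ^ k)
      (by omega),
    one_div_mul_eq_div, eq_div_iff (by positivity)]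
  linear_combination hsum / 2 + hclosed / 2
end

section
/- For every integer n ≥ 1 the following closed forms hold, where C(m,k) = 0 when k > m or k < 0: (a) Σ_{i=0}^{n} C(n−i−1, 2i)·2^i equals (1/5)(2^{2k} + (−1)^{k−1}) if n = 2k is even and (1/5)(2^{2k+1} + 3(−1)^k) if n = 2k+1 is odd; (b) Σ_{i=0}^{n} C(n−i, 2i+1)·2^i equals (1/5)(2^{2k+1} + 2(−1)^{k−1}) if n = 2k is even and (1/5)(2^{2k+2} + (−1)^k) if n = 2k+1 is odd. -/
open Finset

private def Saux (n : ℕ) : ℕ := ∑ i ∈ range (n+1), (n - i).choose (2*i) * 2^i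
private def Raux (n : ℕ) : ℕ := ∑ i ∈ range (n+1), (n - i).choose (2*i+1) * 2^i

private lemma Raux_succ (n : ℕ) : Raux (n+1) = Raux n + Saux n := by
  unfold Raux Saux
  rw [Finset.sum_range_succ]
  have h0 : (n + 1 - (n+1)).choose (2*(n+1)+1) = 0 := by simp
  rw [h0]
  have h : ∀ i ∈ range (n+1),
      (n + 1 - i).choose (2*i+1) * 2^i
      = (n - i).choose (2*i+1) * 2^i + (n - i).choose (2*i) * 2^i := by
    intro i hi
    rw [Finset.mem_range] at hi
    have : n + 1 - i = (n - i) + 1 := by omega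
    rw [this, Nat.choose_succ_succ]
    ring
  rw [Finset.sum_congr rfl h, Finset.sum_add_distrib]
  ring

private lemma Saux_succ (n : ℕ) : Saux (n+2) = Saux (n+1) + 2 * Raux n := by
  unfold Raux Saux
  rw [Finset.sum_range_succ' (fun i => (n + 2 - i).choose (2*i) * 2^i),
      Finset.sum_range_succ' (fun i => (n + 1 - i).choose (2*i) * 2^i)]
  simp only [Nat.sub_zero, Nat.mul_zero, Nat.choose_zero_right, pow_zero, mul_one]
  rw [Finset.sum_range_succ (fun i => (n + 2 - (i+1)).choose (2*(i+1)) * 2^(i+1))]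
  have h0 : (n + 2 - (n+1+1)).choose (2*(n+1+1)) = 0 := by
    have e : n + 2 - (n+1+1) = 0 := by omega
    rw [e]; exact Nat.choose_eq_zero_of_lt (by omega)
  rw [h0]
  have h : ∀ i ∈ range (n+1),
      (n + 2 - (i+1)).choose (2*(i+1)) * 2^(i+1)
      = (n + 1 - (i+1)).choose (2*(i+1)) * 2^(i+1)
        + 2 * ((n - i).choose (2*i+1) * 2^i) := by
    intro i hi
    rw [Finset.mem_range] at hi
    have h1 : n + 2 - (i+1) = (n - i) + 1 := by omega
    have h2 : n + 1 - (i+1) = n - i := by omega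
    have h3 : 2*(i+1) = (2*i+1) + 1 := by ring
    rw [h1, h2, h3, Nat.choose_succ_succ]
    ring
  rw [Finset.sum_congr rfl h, Finset.sum_add_distrib, Finset.mul_sum]
  ring

private lemma key (k : ℕ) :
    (5 * Saux (2*k) : ℤ) = 2^(2*k+1) + 3 * (-1)^k ∧
    (5 * Raux (2*k) : ℤ) = 2^(2*k+1) + 2 * (-1)^(k+1) ∧
    (5 * Saux (2*k+1) : ℤ) = 2^(2*k+2) + (-1)^k ∧
    (5 * Raux (2*k+1) : ℤ) = 2^(2*k+2) + (-1)^k := by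
  induction k with
  | zero =>
    have hS0 : Saux 0 = 1 := by decide
    have hR0 : Raux 0 = 0 := by decide
    have hS1 : Saux 1 = 1 := by decide
    have hR1 : Raux 1 = 1 := by decide
    refine ⟨?_, ?_, ?_, ?_⟩ <;> simp [hS0, hR0, hS1, hR1]
  | succ m ih =>
    obtain ⟨hS, hR, hS', hR'⟩ := ih
    have e1 : Saux (2*(m+1)) = Saux (2*m+1) + 2 * Raux (2*m) := by
      have := Saux_succ (2*m)
      have h : 2*(m+1) = 2*m+2 := by ring
      rw [h]; exact this
    have e2 : Raux (2*(m+1)) = Raux (2*m+1) + Saux (2*m+1) := by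
      have := Raux_succ (2*m+1)
      have h : 2*(m+1) = (2*m+1)+1 := by ring
      rw [h]; exact this
    have e3 : Saux (2*(m+1)+1) = Saux (2*(m+1)) + 2 * Raux (2*m+1) := by
      have := Saux_succ (2*m+1)
      have h : 2*(m+1)+1 = (2*m+1)+2 := by ring
      have h2 : 2*(m+1) = (2*m+1)+1 := by ring
      rw [h, h2]; exact this
    have e4 : Raux (2*(m+1)+1) = Raux (2*(m+1)) + Saux (2*(m+1)) := by
      exact Raux_succ (2*(m+1))
    have p1 : (5 * Saux (2*(m+1)) : ℤ) = 2^(2*(m+1)+1) + 3 * (-1)^(m+1) := by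
      rw [e1]; push_cast; linear_combination hS' + 2*hR
    have p2 : (5 * Raux (2*(m+1)) : ℤ) = 2^(2*(m+1)+1) + 2 * (-1)^(m+1+1) := by
      rw [e2]; push_cast; linear_combination hR' + hS'
    have p3 : (5 * Saux (2*(m+1)+1) : ℤ) = 2^(2*(m+1)+2) + (-1)^(m+1) := by
      rw [e3, e1]; push_cast; linear_combination hS' + 2*hR + 2*hR'
    have p4 : (5 * Raux (2*(m+1)+1) : ℤ) = 2^(2*(m+1)+2) + (-1)^(m+1) := by
      rw [e4]; push_cast; push_cast at p1 p2; linear_combination p1 + p2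
    exact ⟨p1, p2, p3, p4⟩

/-- Closed forms (5.5) and (5.6): for `n ≥ 1`,
(a) `Σ_{i=0}^{n} C(n−i−1, 2i)·2^i = (1/5)(2^{2k} + (−1)^{k−1})` if `n = 2k`,
    and `(1/5)(2^{2k+1} + 3(−1)^k)` if `n = 2k+1`;
(b) `Σ_{i=0}^{n} C(n−i, 2i+1)·2^i = (1/5)(2^{2k+1} + 2(−1)^{k−1})` if `n = 2k`,
    and `(1/5)(2^{2k+2} + (−1)^k)` if `n = 2k+1`. -/
theorem binom_sum_closed_forms (n : ℕ) (hn : 1 ≤ n) :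
    (∀ k : ℕ, n = 2 * k →
      (∑ i ∈ Finset.range (n + 1), (Nat.choose (n - i - 1) (2 * i) : ℝ) * 2 ^ i =
        (1 / 5) * (2 ^ (2 * k) + (-1 : ℝ) ^ (k - 1))) ∧
      (∑ i ∈ Finset.range (n + 1), (Nat.choose (n - i) (2 * i + 1) : ℝ) * 2 ^ i =
        (1 / 5) * (2 ^ (2 * k + 1) + 2 * (-1 : ℝ) ^ (k - 1)))) ∧
    (∀ k : ℕ, n = 2 * k + 1 →
      (∑ i ∈ Finset.range (n + 1), (Nat.choose (n - i - 1) (2 * i) : ℝ) * 2 ^ i =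
        (1 / 5) * (2 ^ (2 * k + 1) + 3 * (-1 : ℝ) ^ k)) ∧
      (∑ i ∈ Finset.range (n + 1), (Nat.choose (n - i) (2 * i + 1) : ℝ) * 2 ^ i =
        (1 / 5) * (2 ^ (2 * k + 2) + (-1 : ℝ) ^ k))) := by
  -- The A-sum equals Saux (n-1), the B-sum equals Raux n.
  have hA : ∑ i ∈ Finset.range (n + 1), (Nat.choose (n - i - 1) (2 * i) : ℝ) * 2 ^ i
      = (Saux (n-1) : ℝ) := by
    unfold Saux
    push_cast
    rw [show n + 1 = (n - 1 + 1) + 1 by omega, Finset.sum_range_succ]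
    have h0 : (n - (n - 1 + 1) - 1).choose (2 * (n - 1 + 1)) = 0 := by
      have : n - (n - 1 + 1) - 1 = 0 := by omega
      rw [this]
      exact Nat.choose_eq_zero_of_lt (by omega)
    rw [h0]
    simp only [Nat.cast_zero, zero_mul, add_zero]
    apply Finset.sum_congr rfl
    intro i hi
    have e : n - i - 1 = n - 1 - i := by omega
    rw [e]
  have hB : ∑ i ∈ Finset.range (n + 1), (Nat.choose (n - i) (2 * i + 1) : ℝ) * 2 ^ i
      = (Raux n : ℝ) := by
    unfold Raux
    push_cast
    rfl
  constructor
  · intro k hk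
    obtain ⟨k', rfl⟩ : ∃ k', k = k' + 1 := ⟨k - 1, by omega⟩
    have hkey := key k'
    have hn1 : n - 1 = 2*k' + 1 := by omega
    constructor
    · rw [hA, hn1]
      have h := hkey.2.2.1
      have hc : ((Saux (2*k'+1) : ℤ) : ℝ) = (Saux (2*k'+1) : ℝ) := by push_cast; rfl
      have h' : (5 * Saux (2*k'+1) : ℝ) = 2^(2*k'+2) + (-1)^k' := by
        exact_mod_cast congrArg (Int.cast : ℤ → ℝ) h
      have hk1 : k' + 1 - 1 = k' := by omega
      rw [hk1]
      have : 2*(k'+1) = 2*k'+2 := by ring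
      rw [this]
      linarith
    · rw [hB, hk]
      have h := (key (k'+1)).2.1
      have h' : (5 * Raux (2*(k'+1)) : ℝ) = 2^(2*(k'+1)+1) + 2*(-1)^(k'+1+1) := by
        exact_mod_cast congrArg (Int.cast : ℤ → ℝ) h
      have hk1 : k' + 1 - 1 = k' := by omega
      rw [hk1]
      have hpow : ((-1:ℝ))^(k'+1+1) = (-1)^k' := by
        rw [pow_succ, pow_succ]; ring
      rw [hpow] at h'
      linarith
  · intro k hk
    have hkey := key k
    constructor
    · rw [hA]
      have hn1 : n - 1 = 2*k := by omega
      rw [hn1]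
      have h' : (5 * Saux (2*k) : ℝ) = 2^(2*k+1) + 3*(-1)^k := by
        exact_mod_cast congrArg (Int.cast : ℤ → ℝ) hkey.1
      linarith
    · rw [hB, hk]
      have h' : (5 * Raux (2*k+1) : ℝ) = 2^(2*k+2) + (-1)^k := by
        exact_mod_cast congrArg (Int.cast : ℤ → ℝ) hkey.2.2.2
      linarith
end
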